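/- arXiv:2210.08797 — 4 statements merged into one kernel-verified Lean document; each statement's English description precedes it below -/
import Mathlib

section
/- Fix an integer k ≥ 1. For every integer v ≥ 1, P(V(k) = v) = h_{v−k+1}·α^{k−1}, where the sequence (h_v)_{v∈ℤ} is defined by h_v = 0 for v ≤ 0, h_1 = p, h_2 = q(1−β), and h_v = β·h_{v−1} + (1−α)(1−β)·∑_{i=0}^{k−2} α^i·h_{v−i−2} for v ≥ 3. -/
open MeasureTheory Finset

/-- Waiting time for the first success run of length `k`: the smallest `n ≥ k` such that
trials `n - k + 1, …, n` are all successes (trials are indexed from `1`). -/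
noncomputable def waitingTime (k : ℕ) (ω : ℕ → Bool) : ℕ :=
  sInf {n | k ≤ n ∧ ∀ i ∈ Finset.Icc (n - k + 1) n, ω i = true}

def mtrans (α β : ℝ) (c c' : Bool) : ℝ :=
  if c = true then (if c' = true then α else 1 - α) else (if c' = true then 1 - β else β)

def mW (p α β : ℝ) (n : ℕ) (b : ℕ → Bool) : ℝ :=
  (if b 1 = true then p else 1 - p) * ∏ i ∈ Finset.Icc 1 (n - 1), mtrans α β (b i) (b (i + 1))

def mext (n : ℕ) (t : Fin n → Bool) : ℕ → Bool :=
  fun i => if h : 1 ≤ i ∧ i ≤ n then t ⟨i - 1, by omega⟩ else false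

open Classical in
noncomputable def mF (p α β : ℝ) (n : ℕ) (Q : (ℕ → Bool) → Prop) : ℝ :=
  ∑ t : Fin n → Bool, if Q (mext n t) then mW p α β n (mext n t) else 0

def mRun (k n : ℕ) (ω : ℕ → Bool) : Prop := ∀ i ∈ Finset.Icc (n - k + 1) n, ω i = true
def mNR (k m : ℕ) (ω : ℕ → Bool) : Prop := ∀ n, k ≤ n → n ≤ m → ¬ mRun k n ω
def mDep (n : ℕ) (Q : (ℕ → Bool) → Prop) : Prop :=
  ∀ ω ω' : ℕ → Bool, (∀ i, 1 ≤ i → i ≤ n → ω i = ω' i) → Q ω → Q ω'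

lemma mext_eq {n i : ℕ} (t : Fin n → Bool) (h1 : 1 ≤ i) (h2 : i ≤ n) :
    mext n t i = t ⟨i - 1, by omega⟩ := by
  simp [mext, h1, h2]

lemma mext_snoc_le {n : ℕ} (t : Fin n → Bool) (b : Bool) {i : ℕ} (h2 : i ≤ n) :
    mext (n + 1) (Fin.snoc t b) i = mext n t i := by
  rcases Nat.eq_zero_or_pos i with rfl | h1
  · simp [mext]
  · rw [mext_eq _ h1 (by omega), mext_eq _ h1 h2]
    have : (⟨i - 1, by omega⟩ : Fin (n + 1)) = Fin.castSucc ⟨i - 1, by omega⟩ := rfl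
    rw [this, Fin.snoc_castSucc]

lemma mext_snoc_last {n : ℕ} (t : Fin n → Bool) (b : Bool) :
    mext (n + 1) (Fin.snoc t b) (n + 1) = b := by
  rw [mext_eq _ (by omega) (by omega)]
  have : (⟨n + 1 - 1, by omega⟩ : Fin (n + 1)) = Fin.last n := rfl
  rw [this, Fin.snoc_last]

lemma mW_congr {p α β : ℝ} {n : ℕ} {b b' : ℕ → Bool} (hn : 1 ≤ n)
    (hb : ∀ i, 1 ≤ i → i ≤ n → b i = b' i) : mW p α β n b = mW p α β n b' := by
  unfold mW
  rw [hb 1 le_rfl hn]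
  congr 1
  refine Finset.prod_congr rfl fun i hi => ?_
  simp only [Finset.mem_Icc] at hi
  rw [hb i hi.1 (by omega), hb (i + 1) (by omega) (by omega)]

lemma mW_succ {p α β : ℝ} {n : ℕ} (b : ℕ → Bool) (hn : 1 ≤ n) :
    mW p α β (n + 1) b = mW p α β n b * mtrans α β (b n) (b (n + 1)) := by
  unfold mW
  have h : n + 1 - 1 = (n - 1) + 1 := by omega
  rw [h, Finset.prod_Icc_succ_top (by omega), ← mul_assoc]
  have h2 : n - 1 + 1 = n := by omega
  rw [h2]

lemma mtrans_nonneg {α β : ℝ} (hα0 : 0 < α) (hα1 : α < 1) (hβ0 : 0 < β) (hβ1 : β < 1)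
    (c c' : Bool) : 0 ≤ mtrans α β c c' := by
  unfold mtrans; cases c <;> cases c' <;> simp <;> linarith

lemma mW_nonneg {p α β : ℝ} (hp0 : 0 < p) (hp1 : p < 1) (hα0 : 0 < α) (hα1 : α < 1)
    (hβ0 : 0 < β) (hβ1 : β < 1) (n : ℕ) (b : ℕ → Bool) : 0 ≤ mW p α β n b := by
  unfold mW
  apply mul_nonneg
  · split <;> linarith
  · exact Finset.prod_nonneg fun i _ => mtrans_nonneg hα0 hα1 hβ0 hβ1 _ _

lemma mF_congr {p α β : ℝ} {n : ℕ} {Q Q' : (ℕ → Bool) → Prop}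
    (h : ∀ ω, Q ω ↔ Q' ω) : mF p α β n Q = mF p α β n Q' := by
  unfold mF
  refine Finset.sum_congr rfl fun t _ => ?_
  by_cases hq : Q (mext n t)
  · rw [if_pos hq, if_pos ((h _).1 hq)]
  · rw [if_neg hq, if_neg (fun hq' => hq ((h _).2 hq'))]

lemma mF_succ {p α β : ℝ} {n : ℕ} {Q : (ℕ → Bool) → Prop} {c : Bool} (hn : 1 ≤ n)
    (hdep : mDep n Q) (hc : ∀ ω, Q ω → ω n = c) (c' : Bool) :
    mF p α β (n + 1) (fun ω => Q ω ∧ ω (n + 1) = c') = mF p α β n Q * mtrans α β c c' := by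
  classical
  unfold mF
  rw [← Equiv.sum_comp (Fin.snocEquiv (fun _ => Bool)), Fintype.sum_prod_type,
    Finset.sum_comm, Finset.sum_mul]
  refine Finset.sum_congr rfl fun t _ => ?_
  have hagree : ∀ b : Bool, ∀ i, 1 ≤ i → i ≤ n → mext (n + 1) (Fin.snoc t b) i = mext n t i :=
    fun b i _ h2 => mext_snoc_le t b h2
  have hQiff : ∀ b : Bool, Q (mext (n + 1) (Fin.snoc t b)) ↔ Q (mext n t) := by
    intro b
    constructor
    · exact hdep _ _ (fun i h1 h2 => hagree b i h1 h2)
    · exact hdep _ _ (fun i h1 h2 => (hagree b i h1 h2).symm)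
  have hsnoc : ∀ b : Bool, (Fin.snocEquiv (fun _ => Bool)) (b, t) = Fin.snoc t b := fun _ => rfl
  have hW : ∀ b : Bool, Q (mext n t) →
      mW p α β (n + 1) (mext (n + 1) (Fin.snoc t b)) = mW p α β n (mext n t) * mtrans α β c b := by
    intro b hq
    rw [mW_succ _ hn, mW_congr (p := p) hn (fun i h1 h2 => hagree b i h1 h2),
      mext_snoc_le t b le_rfl, mext_snoc_last, hc _ hq]
  rw [Fintype.sum_bool, hsnoc, hsnoc]
  beta_reduce
  by_cases hq : Q (mext n t)
  · rw [if_pos hq]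
    rcases c' with _ | _
    · rw [if_neg (fun hh => by simpa [mext_snoc_last] using hh.2),
        if_pos ⟨(hQiff false).2 hq, mext_snoc_last t false⟩, hW false hq, zero_add]
    · rw [if_pos ⟨(hQiff true).2 hq, mext_snoc_last t true⟩,
        if_neg (fun hh => by simpa [mext_snoc_last] using hh.2), hW true hq, add_zero]
  · rw [if_neg hq, if_neg (fun hh => hq ((hQiff true).1 hh.1)),
      if_neg (fun hh => hq ((hQiff false).1 hh.1)), zero_add, zero_mul]

lemma mtrans_tt {α β : ℝ} : mtrans α β true true = α := rfl
lemma mtrans_tf {α β : ℝ} : mtrans α β true false = 1 - α := rfl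
lemma mtrans_ft {α β : ℝ} : mtrans α β false true = 1 - β := rfl
lemma mtrans_ff {α β : ℝ} : mtrans α β false false = β := rfl

lemma mDep_mono {n n' : ℕ} {Q : (ℕ → Bool) → Prop} (h : n ≤ n') (hd : mDep n Q) : mDep n' Q :=
  fun ω ω' hag => hd ω ω' (fun i h1 h2 => hag i h1 (le_trans h2 h))

lemma mDep_and {n : ℕ} {Q Q' : (ℕ → Bool) → Prop} (hd : mDep n Q) (hd' : mDep n Q') :
    mDep n (fun ω => Q ω ∧ Q' ω) :=
  fun ω ω' hag hq => ⟨hd ω ω' hag hq.1, hd' ω ω' hag hq.2⟩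

lemma mDep_eq {n j : ℕ} {c : Bool} (h1 : 1 ≤ j) (h2 : j ≤ n) :
    mDep n (fun ω => ω j = c) :=
  fun ω ω' hag hq => (hag j h1 h2).symm.trans hq

lemma mDep_ones {n a b : ℕ} (ha : 1 ≤ a) (hb : b ≤ n) :
    mDep n (fun ω => ∀ i, a ≤ i → i ≤ b → ω i = true) :=
  fun ω ω' hag hq i hi1 hi2 =>
    (hag i (le_trans ha hi1) (le_trans hi2 hb)).symm.trans (hq i hi1 hi2)

lemma mDep_run {k n : ℕ} : mDep n (mRun k n) := by
  intro ω ω' hag hq i hi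
  simp only [Finset.mem_Icc] at hi
  exact (hag i (by omega) hi.2).symm.trans (hq i (by simp [Finset.mem_Icc]; omega))

lemma mDep_nr {k m : ℕ} : mDep m (mNR k m) := by
  intro ω ω' hag hq n hk hn hrun
  refine hq n hk hn ?_
  intro i hi
  simp only [Finset.mem_Icc] at hi
  exact (hag i (by omega) (by omega)).trans (hrun i (by simp [Finset.mem_Icc]; omega))

lemma mF_ones {p α β : ℝ} {Q : (ℕ → Bool) → Prop} {s : ℕ} (hs : 1 ≤ s)
    (hdep : mDep s Q) (hc : ∀ ω, Q ω → ω s = false) :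
    ∀ r, 1 ≤ r → mF p α β (s + r) (fun ω => Q ω ∧ ∀ i, s + 1 ≤ i → i ≤ s + r → ω i = true)
      = mF p α β s Q * ((1 - β) * α ^ (r - 1)) := by
  intro r hr
  induction r, hr using Nat.le_induction with
  | base =>
    rw [mF_congr (Q' := fun ω => Q ω ∧ ω (s + 1) = true)
      (fun ω => by
        constructor
        · rintro ⟨hq, ho⟩; exact ⟨hq, ho (s + 1) le_rfl le_rfl⟩
        · rintro ⟨hq, ho⟩
          refine ⟨hq, fun i hi1 hi2 => ?_⟩
          have : i = s + 1 := by omega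
          rw [this]; exact ho)]
    rw [mF_succ hs hdep hc true, mtrans_ft]
    norm_num
  | succ r hr ih =>
    have hstep : mF p α β (s + r + 1)
        (fun ω => (fun ω => Q ω ∧ ∀ i, s + 1 ≤ i → i ≤ s + r → ω i = true) ω
          ∧ ω (s + r + 1) = true)
        = mF p α β (s + r) (fun ω => Q ω ∧ ∀ i, s + 1 ≤ i → i ≤ s + r → ω i = true)
            * mtrans α β true true := by
      refine mF_succ (by omega) ?_ ?_ true
      · exact mDep_and (mDep_mono (by omega) hdep) (mDep_ones (by omega) le_rfl)
      · rintro ω ⟨-, ho⟩; exact ho (s + r) (by omega) le_rfl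
    have heq : mF p α β (s + (r + 1))
        (fun ω => Q ω ∧ ∀ i, s + 1 ≤ i → i ≤ s + (r + 1) → ω i = true)
        = mF p α β (s + r + 1)
        (fun ω => (fun ω => Q ω ∧ ∀ i, s + 1 ≤ i → i ≤ s + r → ω i = true) ω
          ∧ ω (s + r + 1) = true) := by
      have harr : s + (r + 1) = s + r + 1 := by omega
      rw [harr]
      refine mF_congr (fun ω => ?_)
      constructor
      · rintro ⟨hq, ho⟩
        exact ⟨⟨hq, fun i h1 h2 => ho i h1 (by omega)⟩, ho (s + r + 1) (by omega) le_rfl⟩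
      · rintro ⟨⟨hq, ho⟩, hl⟩
        refine ⟨hq, fun i h1 h2 => ?_⟩
        rcases Nat.lt_or_ge i (s + r + 1) with hlt | hge
        · exact ho i h1 (by omega)
        · have : i = s + r + 1 := by omega
          rw [this]; exact hl
    rw [heq, hstep, ih, mtrans_tt, mul_assoc]
    congr 1
    rw [mul_assoc, ← pow_succ]
    congr 2
    omega

lemma mW_one {p α β : ℝ} (b : ℕ → Bool) : mW p α β 1 b = if b 1 = true then p else 1 - p := by
  unfold mW
  rw [show (1 : ℕ) - 1 = 0 from rfl, Finset.Icc_eq_empty (by omega), Finset.prod_empty, mul_one]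

open Classical in
lemma mF_one {p α β : ℝ} (Q : (ℕ → Bool) → Prop) :
    mF p α β 1 Q = (if Q (mext 1 fun _ => true) then p else 0)
      + (if Q (mext 1 fun _ => false) then 1 - p else 0) := by
  classical
  unfold mF
  rw [← Equiv.sum_comp (Equiv.funUnique (Fin 1) Bool).symm, Fintype.sum_bool]
  have he : ∀ c : Bool, (Equiv.funUnique (Fin 1) Bool).symm c = fun _ => c := fun _ => rfl
  have hx : ∀ c : Bool, mext 1 (fun _ => c) 1 = c := fun c => mext_eq _ le_rfl le_rfl
  rw [he, he]
  congr 1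
  · by_cases hq : Q (mext 1 fun _ => true)
    · rw [if_pos hq, if_pos hq, mW_one, hx, if_pos rfl]
    · rw [if_neg hq, if_neg hq]
  · by_cases hq : Q (mext 1 fun _ => false)
    · rw [if_pos hq, if_pos hq, mW_one, hx, if_neg (by simp)]
    · rw [if_neg hq, if_neg hq]

lemma mF_allones {p α β : ℝ} : ∀ m, 1 ≤ m →
    mF p α β m (fun ω => ∀ i, 1 ≤ i → i ≤ m → ω i = true) = p * α ^ (m - 1) := by
  intro m hm
  induction m, hm using Nat.le_induction with
  | base =>
    rw [mF_one]
    rw [if_pos (fun i h1 h2 => by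
      have : i = 1 := by omega
      rw [this]; exact mext_eq _ le_rfl le_rfl)]
    rw [if_neg (fun hq => by
      have := hq 1 le_rfl le_rfl
      rw [mext_eq _ le_rfl le_rfl] at this
      exact Bool.false_ne_true this)]
    norm_num
  | succ m hm ih =>
    have hstep : mF p α β (m + 1)
        (fun ω => (fun ω => ∀ i, 1 ≤ i → i ≤ m → ω i = true) ω ∧ ω (m + 1) = true)
        = mF p α β m (fun ω => ∀ i, 1 ≤ i → i ≤ m → ω i = true) * mtrans α β true true := by
      refine mF_succ hm (mDep_ones le_rfl le_rfl) ?_ true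
      exact fun ω hq => hq m hm le_rfl
    have heq : mF p α β (m + 1) (fun ω => ∀ i, 1 ≤ i → i ≤ m + 1 → ω i = true)
        = mF p α β (m + 1)
        (fun ω => (fun ω => ∀ i, 1 ≤ i → i ≤ m → ω i = true) ω ∧ ω (m + 1) = true) := by
      refine mF_congr (fun ω => ?_)
      constructor
      · intro ho
        exact ⟨fun i h1 h2 => ho i h1 (by omega), ho (m + 1) (by omega) le_rfl⟩
      · rintro ⟨ho, hl⟩ i h1 h2
        rcases Nat.lt_or_ge i (m + 1) with hlt | hge
        · exact ho i h1 (by omega)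
        · have : i = m + 1 := by omega
          rw [this]; exact hl
    rw [heq, hstep, ih, mtrans_tt, mul_assoc, ← pow_succ]
    congr 2
    omega

lemma cyl_measurable (n : ℕ) (b : ℕ → Bool) :
    MeasurableSet {ω : ℕ → Bool | ∀ i, 1 ≤ i → i ≤ n → ω i = b i} := by
  have : {ω : ℕ → Bool | ∀ i, 1 ≤ i → i ≤ n → ω i = b i}
      = ⋂ i, ⋂ (_ : 1 ≤ i), ⋂ (_ : i ≤ n), (fun ω : ℕ → Bool => ω i) ⁻¹' {b i} := by
    ext ω; simp [Set.mem_iInter]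
  rw [this]
  exact MeasurableSet.iInter fun i => MeasurableSet.iInter fun _ =>
    MeasurableSet.iInter fun _ => (measurable_pi_apply i) (measurableSet_singleton _)

lemma mF_meas {p α β : ℝ} (hp0 : 0 < p) (hp1 : p < 1) (hα0 : 0 < α) (hα1 : α < 1)
    (hβ0 : 0 < β) (hβ1 : β < 1) (μ : Measure (ℕ → Bool))
    (hμ : ∀ n, 1 ≤ n → ∀ b : ℕ → Bool,
      μ {ω | ∀ i, 1 ≤ i → i ≤ n → ω i = b i} = ENNReal.ofReal (mW p α β n b))
    {n : ℕ} (hn : 1 ≤ n) {Q : (ℕ → Bool) → Prop} (hdep : mDep n Q) :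
    (μ {ω | Q ω}).toReal = mF p α β n Q := by
  classical
  set T := Finset.univ.filter (fun t : Fin n → Bool => Q (mext n t)) with hT
  have hagree : ∀ (ω : ℕ → Bool) (t : Fin n → Bool), (∀ j : Fin n, t j = ω (j + 1)) →
      ∀ i, 1 ≤ i → i ≤ n → mext n t i = ω i := by
    intro ω t ht i h1 h2
    rw [mext_eq t h1 h2, ht]
    congr 1
    simp only [Fin.val_mk]
    omega
  have hset : {ω | Q ω} = ⋃ t ∈ T, {ω : ℕ → Bool | ∀ i, 1 ≤ i → i ≤ n → ω i = mext n t i} := by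
    ext ω
    simp only [Set.mem_setOf_eq, Set.mem_iUnion, hT, Finset.mem_filter, Finset.mem_univ,
      true_and]
    constructor
    · intro hq
      refine ⟨fun j => ω (j + 1), ?_, ?_⟩
      · exact hdep ω _ (fun i h1 h2 => (hagree ω _ (fun j => rfl) i h1 h2).symm) hq
      · exact fun i h1 h2 => (hagree ω _ (fun j => rfl) i h1 h2).symm
    · rintro ⟨t, hq, hag⟩
      exact hdep _ ω (fun i h1 h2 => (hag i h1 h2).symm) hq
  rw [hset, measure_biUnion_finset ?_ (fun t _ => cyl_measurable n _)]
  · have hv : ∀ t ∈ T, μ {ω : ℕ → Bool | ∀ i, 1 ≤ i → i ≤ n → ω i = mext n t i}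
        = ENNReal.ofReal (mW p α β n (mext n t)) := fun t _ => hμ n hn _
    rw [Finset.sum_congr rfl hv, ← ENNReal.ofReal_sum_of_nonneg
      (fun t _ => mW_nonneg hp0 hp1 hα0 hα1 hβ0 hβ1 n _),
      ENNReal.toReal_ofReal
      (Finset.sum_nonneg fun t _ => mW_nonneg hp0 hp1 hα0 hα1 hβ0 hβ1 n _)]
    rw [hT, Finset.sum_filter]
    rfl
  · intro t ht t' ht' hne
    simp only [Function.onFun]
    rw [Set.disjoint_left]
    intro ω hω hω'
    refine hne ?_
    funext j
    have h1 : ω ((j : ℕ) + 1) = mext n t ((j : ℕ) + 1) := hω ((j : ℕ) + 1) (by omega) (by omega)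
    have h2 : ω ((j : ℕ) + 1) = mext n t' ((j : ℕ) + 1) := hω' ((j : ℕ) + 1) (by omega) (by omega)
    rw [mext_eq t (by omega) (by omega)] at h1
    rw [mext_eq t' (by omega) (by omega)] at h2
    have hj : (⟨(j : ℕ) + 1 - 1, by omega⟩ : Fin n) = j := by
      apply Fin.ext; simp
    rw [hj] at h1 h2
    exact h1.symm.trans h2

open Classical in
lemma mF_partition {p α β : ℝ} {n N : ℕ} {Q : (ℕ → Bool) → Prop}
    {R : ℕ → (ℕ → Bool) → Prop}
    (hx : ∀ ω, Q ω → ∃! j, j < N ∧ R j ω) :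
    mF p α β n Q = ∑ j ∈ Finset.range N, mF p α β n (fun ω => Q ω ∧ R j ω) := by
  unfold mF
  rw [Finset.sum_comm]
  refine Finset.sum_congr rfl fun t _ => ?_
  by_cases hq : Q (mext n t)
  · rw [if_pos hq]
    obtain ⟨j₀, ⟨hjN, hjR⟩, huniq⟩ := hx _ hq
    rw [Finset.sum_eq_single_of_mem j₀ (Finset.mem_range.2 hjN)]
    · rw [if_pos ⟨hq, hjR⟩]
    · intro j hj hne
      refine if_neg ?_
      rintro ⟨-, hR⟩
      exact hne (huniq j ⟨Finset.mem_range.1 hj, hR⟩)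
  · rw [if_neg hq, Finset.sum_eq_zero]
    intro j hj
    exact if_neg (fun hh => hq hh.1)

lemma mRun_self {k n : ℕ} {ω : ℕ → Bool} (hk : 1 ≤ k) (hn : 1 ≤ n) (h : mRun k n ω) :
    ω n = true :=
  h n (by simp [Finset.mem_Icc]; omega)

lemma mF_false {p α β : ℝ} {n : ℕ} {Q : (ℕ → Bool) → Prop} (h : ∀ ω, ¬ Q ω) :
    mF p α β n Q = 0 :=
  Finset.sum_eq_zero fun t _ => if_neg (h _)

lemma mNR_succ {k m : ℕ} {ω : ℕ → Bool} (hk : 1 ≤ k) (hm : 1 ≤ m) (hω : ω m = false) :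
    mNR k m ω ↔ mNR k (m - 1) ω := by
  constructor
  · exact fun h n hkn hn => h n hkn (by omega)
  · intro h n hkn hn hrun
    rcases Nat.lt_or_ge n m with hlt | hge
    · exact h n hkn (by omega) hrun
    · have : n = m := by omega
      subst this
      rw [mRun_self hk (by omega) hrun] at hω
      exact absurd hω (by simp)

lemma mEP {k v : ℕ} (hk : 1 ≤ k) (hv : k + 1 ≤ v) (ω : ℕ → Bool) :
    (mRun k v ω ∧ mNR k (v - 1) ω)
      ↔ (mNR k (v - k) ω ∧ ω (v - k) = false
          ∧ ∀ i, v - k + 1 ≤ i → i ≤ v → ω i = true) := by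
  constructor
  · rintro ⟨hr, hnr⟩
    have hones : ∀ i, v - k + 1 ≤ i → i ≤ v → ω i = true := by
      intro i h1 h2
      exact hr i (by simp [Finset.mem_Icc]; omega)
    refine ⟨fun n hkn hn => hnr n hkn (by omega), ?_, hones⟩
    by_contra hb
    have hb' : ω (v - k) = true := by
      cases hvk : ω (v - k)
      · exact absurd hvk hb
      · rfl
    refine hnr (v - 1) (by omega) le_rfl ?_
    intro i hi
    simp only [Finset.mem_Icc] at hi
    rcases Nat.lt_or_ge (v - k) i with hlt | hge
    · exact hones i (by omega) (by omega)
    · have : i = v - k := by omega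
      rw [this]; exact hb'
  · rintro ⟨hnr, hz, ho⟩
    constructor
    · intro i hi
      simp only [Finset.mem_Icc] at hi
      exact ho i (by omega) (by omega)
    · intro n hkn hn hrun
      rcases le_or_gt n (v - k) with hle | hgt
      · exact hnr n hkn hle hrun
      · have := hrun (v - k) (by simp [Finset.mem_Icc]; omega)
        rw [hz] at this
        exact absurd this (by simp)

lemma mPW {s : ℕ} (hs : 1 ≤ s) (ω : ℕ → Bool) :
    ∃! j, j < s ∧ ((∀ i, s - j ≤ i → i ≤ s - 1 → ω i = true)
      ∧ (j < s - 1 → ω (s - 1 - j) = false)) := by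
  classical
  have hP : ∃ j, j = s - 1 ∨ ω (s - 1 - j) = false := ⟨s - 1, Or.inl rfl⟩
  set j₀ := Nat.find hP with hj₀
  have hspec := Nat.find_spec hP
  have hmin := fun m (hm : m < j₀) => Nat.find_min hP hm
  have hj₀le : j₀ ≤ s - 1 := Nat.find_le (Or.inl rfl)
  refine ⟨j₀, ⟨by omega, ?_, ?_⟩, ?_⟩
  · intro i h1 h2
    have hji : s - 1 - i < j₀ := by omega
    have := hmin _ hji
    push_neg at this
    have := this.2
    have harith : s - 1 - (s - 1 - i) = i := by omega
    rw [harith] at this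
    cases hc : ω i
    · exact absurd hc this
    · rfl
  · intro hlt
    rcases hspec with h | h
    · omega
    · exact h
  · rintro j' ⟨hj's, hones, hguard⟩
    by_contra hne
    rcases Nat.lt_or_ge j' j₀ with hlt | hge
    · have := hmin _ hlt
      push_neg at this
      exact this.2 (hguard (by omega))
    · have hgt : j₀ < j' := by omega
      have hj₀lt : j₀ < s - 1 := by omega
      have h1 : ω (s - 1 - j₀) = true := hones _ (by omega) (by omega)
      rcases hspec with h | h
      · omega
      · rw [h1] at h
        exact absurd h (by simp)

lemma mP6 {p α β : ℝ} {k : ℕ} (hk : 1 ≤ k) {s : ℕ} (hs : 2 ≤ s) :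
    mF p α β s (fun ω => mNR k s ω ∧ ω s = false)
      = β * mF p α β (s - 1) (fun ω => mNR k (s - 1) ω ∧ ω (s - 1) = false)
        + (∑ i ∈ Finset.range (s - 2), if i + 2 ≤ k then
            (1 - β) * (1 - α) * α ^ i
              * mF p α β (s - 2 - i) (fun ω => mNR k (s - 2 - i) ω ∧ ω (s - 2 - i) = false)
            else 0)
        + (if s ≤ k then (1 - α) * (p * α ^ (s - 2)) else 0) := by
  classical
  obtain ⟨m, rfl⟩ : ∃ m, s = m + 2 := ⟨s - 2, by omega⟩
  have harith2 : m + 2 - 2 = m := by omega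
  have harith1 : m + 2 - 1 = m + 1 := by omega
  rw [mF_partition (N := m + 2)
    (R := fun j ω => (∀ i, m + 2 - j ≤ i → i ≤ m + 2 - 1 → ω i = true)
      ∧ (j < m + 2 - 1 → ω (m + 2 - 1 - j) = false))
    (fun ω _ => mPW (by omega) ω)]
  rw [Finset.sum_range_succ, Finset.sum_range_succ']
  -- piece j = 0
  have hpiece0 : mF p α β (m + 2) (fun ω => (mNR k (m + 2) ω ∧ ω (m + 2) = false)
      ∧ ((∀ i, m + 2 - 0 ≤ i → i ≤ m + 2 - 1 → ω i = true)
        ∧ (0 < m + 2 - 1 → ω (m + 2 - 1 - 0) = false)))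
      = mF p α β (m + 1) (fun ω => mNR k (m + 1) ω ∧ ω (m + 1) = false) * β := by
    rw [mF_congr (Q' := fun ω => (mNR k (m + 1) ω ∧ ω (m + 1) = false) ∧ ω (m + 2) = false)]
    · rw [mF_succ (by omega)
        (mDep_and mDep_nr (mDep_eq (by omega) le_rfl)) (fun ω hq => hq.2) false, mtrans_ff]
    · intro ω
      constructor
      · rintro ⟨⟨hnr, hz⟩, -, hg⟩
        have hz1 : ω (m + 1) = false := by
          have := hg (by omega)
          simpa using this
        refine ⟨⟨?_, hz1⟩, hz⟩
        exact ((mNR_succ hk (by omega) hz).1 hnr : mNR k (m + 2 - 1) ω)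
      · rintro ⟨⟨hnr, hz1⟩, hz⟩
        refine ⟨⟨?_, hz⟩, ?_, ?_⟩
        · refine (mNR_succ hk (by omega) hz).2 ?_
          simpa [harith1] using hnr
        · intro i h1 h2; omega
        · intro _; simpa using hz1
  -- boundary piece j = m + 1
  have hpiecetop : mF p α β (m + 2) (fun ω => (mNR k (m + 2) ω ∧ ω (m + 2) = false)
      ∧ ((∀ i, m + 2 - (m + 1) ≤ i → i ≤ m + 2 - 1 → ω i = true)
        ∧ (m + 1 < m + 2 - 1 → ω (m + 2 - 1 - (m + 1)) = false)))
      = if m + 2 ≤ k then (1 - α) * (p * α ^ m) else 0 := by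
    by_cases hmk : m + 2 ≤ k
    · rw [if_pos hmk]
      rw [mF_congr (Q' := fun ω => (∀ i, 1 ≤ i → i ≤ m + 1 → ω i = true) ∧ ω (m + 2) = false)]
      · rw [mF_succ (by omega) (mDep_ones le_rfl le_rfl)
          (fun ω hq => hq (m + 1) (by omega) le_rfl) false, mtrans_tf,
          mF_allones (m + 1) (by omega)]
        rw [show m + 1 - 1 = m from rfl]
        ring
      · intro ω
        constructor
        · rintro ⟨⟨-, hz⟩, hones, -⟩
          exact ⟨fun i h1 h2 => hones i (by omega) (by omega), hz⟩
        · rintro ⟨hones, hz⟩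
          refine ⟨⟨?_, hz⟩, fun i h1 h2 => hones i (by omega) (by omega), by omega⟩
          intro n hkn hn hrun
          have hn' : n = m + 2 := by omega
          subst hn'
          rw [mRun_self hk (by omega) hrun] at hz
          exact absurd hz (by simp)
    · rw [if_neg hmk, mF_false]
      rintro ω ⟨⟨hnr, -⟩, hones, -⟩
      refine hnr (m + 1) (by omega) (by omega) ?_
      intro i hi
      simp only [Finset.mem_Icc] at hi
      exact hones i (by omega) (by omega)
  -- middle pieces j = i + 1, i < m
  have hpiecemid : ∀ i ∈ Finset.range m,
      mF p α β (m + 2) (fun ω => (mNR k (m + 2) ω ∧ ω (m + 2) = false)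
        ∧ ((∀ i', m + 2 - (i + 1) ≤ i' → i' ≤ m + 2 - 1 → ω i' = true)
          ∧ (i + 1 < m + 2 - 1 → ω (m + 2 - 1 - (i + 1)) = false)))
      = if i + 2 ≤ k then (1 - β) * (1 - α) * α ^ i
          * mF p α β (m - i) (fun ω => mNR k (m - i) ω ∧ ω (m - i) = false)
        else 0 := by
    intro i hi
    rw [Finset.mem_range] at hi
    by_cases hik : i + 2 ≤ k
    · rw [if_pos hik]
      rw [mF_congr (Q' := fun ω =>
          ((fun ω => (mNR k (m - i) ω ∧ ω (m - i) = false)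
            ∧ ∀ i', (m - i) + 1 ≤ i' → i' ≤ (m - i) + (i + 1) → ω i' = true) ω)
          ∧ ω (m + 2) = false)]
      · rw [mF_succ (n := m + 1) ?hn ?hdep ?hc false]
        case hn => omega
        case hdep =>
          refine mDep_and (mDep_and (mDep_mono (by omega) mDep_nr)
            (mDep_eq (by omega) (by omega))) (mDep_ones (by omega) (by omega))
        case hc =>
          rintro ω ⟨-, hones⟩
          exact hones (m + 1) (by omega) (by omega)
        · have hmi : m - i + (i + 1) = m + 1 := by omega
          rw [show mF p α β (m + 1) = mF p α β ((m - i) + (i + 1)) by rw [hmi]]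
          rw [mF_ones (by omega) (mDep_and mDep_nr (mDep_eq (by omega) le_rfl))
            (fun ω hq => hq.2) (i + 1) (by omega), mtrans_tf]
          rw [show i + 1 - 1 = i from rfl]
          ring
      · intro ω
        constructor
        · rintro ⟨⟨hnr, hz⟩, hones, hg⟩
          have hz1 : ω (m - i) = false := by
            have := hg (by omega)
            have harith : m + 2 - 1 - (i + 1) = m - i := by omega
            rwa [harith] at this
          refine ⟨⟨⟨?_, hz1⟩, ?_⟩, hz⟩
          · intro n hkn hn
            exact hnr n hkn (by omega)
          · intro i' h1 h2
            exact hones i' (by omega) (by omega)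
        · rintro ⟨⟨⟨hnr, hz1⟩, hones⟩, hz⟩
          refine ⟨⟨?_, hz⟩, fun i' h1 h2 => hones i' (by omega) (by omega), fun _ => ?_⟩
          · intro n hkn hn hrun
            rcases Nat.lt_or_ge (m - i) n with hgt | hle
            · rcases Nat.lt_or_ge n (m + 2) with hlt2 | hge2
              · -- n in [m-i+1, m+1] : window contains m - i
                have := hrun (m - i) (by simp [Finset.mem_Icc]; omega)
                rw [hz1] at this
                exact absurd this (by simp)
              · have : n = m + 2 := by omega
                subst this
                rw [mRun_self hk (by omega) hrun] at hz
                exact absurd hz (by simp)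
            · exact hnr n hkn hle hrun
          · have harith : m + 2 - 1 - (i + 1) = m - i := by omega
            rw [harith]; exact hz1
    · rw [if_neg hik, mF_false]
      rintro ω ⟨⟨hnr, -⟩, hones, -⟩
      refine hnr (m + 1) (by omega) (by omega) ?_
      intro i' hi'
      simp only [Finset.mem_Icc] at hi'
      exact hones i' (by omega) (by omega)
  rw [hpiece0, hpiecetop, Finset.sum_congr rfl hpiecemid]
  rw [harith1, harith2]
  have : ∀ i ∈ Finset.range m, (if i + 2 ≤ k then (1 - β) * (1 - α) * α ^ i
          * mF p α β (m - i) (fun ω => mNR k (m - i) ω ∧ ω (m - i) = false) else 0)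
      = (if i + 2 ≤ k then (1 - β) * (1 - α) * α ^ i
          * mF p α β (m + 2 - 2 - i) (fun ω => mNR k (m + 2 - 2 - i) ω ∧ ω (m + 2 - 2 - i) = false)
        else 0) := by
    intro i hi
    rw [harith2]
  rw [Finset.sum_congr rfl this, harith2]
  ring

lemma mDp_one {p α β : ℝ} {k : ℕ} (hk : 1 ≤ k) :
    mF p α β 1 (fun ω => mNR k 1 ω ∧ ω 1 = false) = 1 - p := by
  classical
  rw [mF_one]
  rw [if_neg, if_pos, zero_add]
  · constructor
    · intro n hkn hn hrun
      have hn1 : n = 1 := by omega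
      subst hn1
      have := mRun_self hk le_rfl hrun
      rw [mext_eq _ le_rfl le_rfl] at this
      exact absurd this (by simp)
    · exact mext_eq _ le_rfl le_rfl
  · rintro ⟨-, hz⟩
    rw [mext_eq _ le_rfl le_rfl] at hz
    exact absurd hz (by simp)

lemma mSUMEQ {p α : ℝ} {k : ℕ} (hk : 1 ≤ k) (h : ℤ → ℝ)
    (h0 : ∀ v : ℤ, v ≤ 0 → h v = 0) (h1 : h 1 = p) {s : ℕ} (hs : 2 ≤ s) :
    ∑ i ∈ Finset.range (k - 1), α ^ i * h ((s : ℤ) - 1 - i)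
      = (∑ i ∈ Finset.range (s - 2), if i + 2 ≤ k then α ^ i * h ((s : ℤ) - 1 - i) else 0)
        + (if s ≤ k then α ^ (s - 2) * p else 0) := by
  classical
  rcases le_or_gt s k with hks | hks
  · rw [if_pos hks]
    have hsub : Finset.range (s - 1) ⊆ Finset.range (k - 1) := by
      apply Finset.range_subset_range.2; omega
    have hzero : ∀ i ∈ Finset.range (k - 1), i ∉ Finset.range (s - 1) →
        α ^ i * h ((s : ℤ) - 1 - i) = 0 := by
      intro i hi hni
      rw [Finset.mem_range] at hi
      rw [Finset.mem_range, not_lt] at hni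
      rw [h0 _ (by omega), mul_zero]
    rw [← Finset.sum_subset hsub hzero]
    rw [show s - 1 = (s - 2) + 1 from by omega, Finset.sum_range_succ]
    congr 1
    · refine Finset.sum_congr rfl fun i hi => ?_
      rw [Finset.mem_range] at hi
      rw [if_pos (by omega)]
    · rw [show (s : ℤ) - 1 - ((s - 2 : ℕ) : ℤ) = 1 from by omega, h1]
  · rw [if_neg (by omega), add_zero]
    have hsub : Finset.range (k - 1) ⊆ Finset.range (s - 2) := by
      apply Finset.range_subset_range.2; omega
    rw [← Finset.sum_subset hsub ?_]
    · refine Finset.sum_congr rfl fun i hi => ?_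
      rw [Finset.mem_range] at hi
      rw [if_pos (by omega)]
    · intro i hi hni
      rw [Finset.mem_range, not_lt] at hni
      rw [if_neg (by omega)]

lemma mC {p α β : ℝ} {k : ℕ} (hk : 1 ≤ k) (h : ℤ → ℝ)
    (h0 : ∀ v : ℤ, v ≤ 0 → h v = 0) (h1 : h 1 = p) (h2 : h 2 = (1 - p) * (1 - β))
    (hrec : ∀ v : ℤ, 3 ≤ v →
      h v = β * h (v - 1)
        + (1 - α) * (1 - β) * ∑ i ∈ Finset.range (k - 1), α ^ i * h (v - i - 2)) :
    ∀ s : ℕ, 1 ≤ s →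
      (1 - β) * mF p α β s (fun ω => mNR k s ω ∧ ω s = false) = h ((s : ℤ) + 1) := by
  intro s
  induction s using Nat.strong_induction_on with
  | _ s ih =>
    intro hs1
    rcases eq_or_lt_of_le hs1 with hs1' | hs2
    · rw [← hs1', mDp_one hk, show ((1 : ℕ) : ℤ) + 1 = 2 from by norm_num, h2]
      ring
    · have hs2 : 2 ≤ s := hs2
      have hDp1 : (1 - β) * mF p α β (s - 1) (fun ω => mNR k (s - 1) ω ∧ ω (s - 1) = false)
          = h (s : ℤ) := by
        rw [ih (s - 1) (by omega) (by omega), show ((s - 1 : ℕ) : ℤ) + 1 = (s : ℤ) from by omega]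
      rw [mP6 hk hs2, hrec ((s : ℤ) + 1) (by omega),
        show (s : ℤ) + 1 - 1 = (s : ℤ) from by ring]
      have esum : ∑ i ∈ Finset.range (k - 1), α ^ i * h ((s : ℤ) + 1 - i - 2)
          = (∑ i ∈ Finset.range (s - 2), if i + 2 ≤ k then α ^ i * h ((s : ℤ) - 1 - i) else 0)
            + (if s ≤ k then α ^ (s - 2) * p else 0) := by
        rw [Finset.sum_congr rfl (fun i _ => by
          rw [show (s : ℤ) + 1 - (i : ℤ) - 2 = (s : ℤ) - 1 - (i : ℤ) from by ring])]
        exact mSUMEQ hk h h0 h1 hs2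
      rw [esum]
      have hA : (1 - β) * (β * mF p α β (s - 1)
          (fun ω => mNR k (s - 1) ω ∧ ω (s - 1) = false)) = β * h (s : ℤ) := by
        rw [← hDp1]; ring
      have hB : (1 - β) * (∑ i ∈ Finset.range (s - 2), if i + 2 ≤ k then
            (1 - β) * (1 - α) * α ^ i
              * mF p α β (s - 2 - i) (fun ω => mNR k (s - 2 - i) ω ∧ ω (s - 2 - i) = false)
            else 0)
          = (1 - α) * (1 - β)
            * ∑ i ∈ Finset.range (s - 2), if i + 2 ≤ k then α ^ i * h ((s : ℤ) - 1 - i) else 0 := by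
        rw [Finset.mul_sum, Finset.mul_sum]
        refine Finset.sum_congr rfl fun i hi => ?_
        rw [Finset.mem_range] at hi
        have hDpi : (1 - β) * mF p α β (s - 2 - i)
            (fun ω => mNR k (s - 2 - i) ω ∧ ω (s - 2 - i) = false) = h ((s : ℤ) - 1 - i) := by
          rw [ih (s - 2 - i) (by omega) (by omega),
            show ((s - 2 - i : ℕ) : ℤ) + 1 = (s : ℤ) - 1 - (i : ℤ) from by omega]
        split_ifs with hc
        · rw [← hDpi]; ring
        · rw [mul_zero, mul_zero]
      have hC : (1 - β) * (if s ≤ k then (1 - α) * (p * α ^ (s - 2)) else 0)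
          = (1 - α) * (1 - β) * (if s ≤ k then α ^ (s - 2) * p else 0) := by
        split_ifs with hc
        · ring
        · rw [mul_zero, mul_zero]
      linear_combination hA + hB + hC

lemma mInf_eq_iff {S : Set ℕ} {v : ℕ} (hv : 1 ≤ v) :
    sInf S = v ↔ v ∈ S ∧ ∀ m, m < v → m ∉ S := by
  constructor
  · intro h
    have hne : S.Nonempty := by
      by_contra hne
      rw [Set.not_nonempty_iff_eq_empty] at hne
      rw [hne, Nat.sInf_empty] at h
      omega
    refine ⟨h ▸ Nat.sInf_mem hne, fun m hm hmS => ?_⟩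
    have := Nat.sInf_le hmS
    omega
  · rintro ⟨hv', hmin⟩
    have h1 := Nat.sInf_le hv'
    have h2 : v ≤ sInf S := by
      by_contra hc
      push_neg at hc
      exact hmin _ hc (Nat.sInf_mem ⟨v, hv'⟩)
    omega


theorem stmt9 (p α β : ℝ) (hp0 : 0 < p) (hp1 : p < 1)
    (hα0 : 0 < α) (hα1 : α < 1) (hβ0 : 0 < β) (hβ1 : β < 1)
    (k : ℕ) (hk : 1 ≤ k)
    (μ : Measure (ℕ → Bool)) [IsProbabilityMeasure μ]
    -- μ is the law of the two-state Markov chain with initial distribution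
    -- `P(X₁ = 1) = p`, `P(X₁ = 0) = 1 - p` and transition probabilities
    -- `P(1 → 1) = α`, `P(1 → 0) = 1 - α`, `P(0 → 0) = β`, `P(0 → 1) = 1 - β`.
    (hμ : ∀ (n : ℕ), 1 ≤ n → ∀ (b : ℕ → Bool),
      μ {ω | ∀ i, 1 ≤ i → i ≤ n → ω i = b i}
        = ENNReal.ofReal ((if b 1 = true then p else 1 - p) *
            ∏ i ∈ Finset.Icc 1 (n - 1),
              (if b i = true then (if b (i + 1) = true then α else 1 - α)
               else (if b (i + 1) = true then 1 - β else β))))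
    (h : ℤ → ℝ) (h0 : ∀ v : ℤ, v ≤ 0 → h v = 0)
    (h1 : h 1 = p) (h2 : h 2 = (1 - p) * (1 - β))
    (hrec : ∀ v : ℤ, 3 ≤ v →
      h v = β * h (v - 1)
        + (1 - α) * (1 - β) * ∑ i ∈ Finset.range (k - 1), α ^ i * h (v - i - 2)) :
    ∀ v : ℕ, 1 ≤ v →
      (μ {ω | waitingTime k ω = v}).toReal = h ((v : ℤ) - k + 1) * α ^ (k - 1) := by
  have hμ' : ∀ n, 1 ≤ n → ∀ b : ℕ → Bool,
      μ {ω | ∀ i, 1 ≤ i → i ≤ n → ω i = b i} = ENNReal.ofReal (mW p α β n b) := by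
    intro n hn b
    exact hμ n hn b
  intro v hv
  rcases Nat.lt_or_ge v k with hvk | hvk
  · have hempty : {ω : ℕ → Bool | waitingTime k ω = v} = ∅ := by
      ext ω
      simp only [Set.mem_setOf_eq, Set.mem_empty_iff_false, iff_false]
      intro hw
      rw [waitingTime, mInf_eq_iff hv] at hw
      exact absurd hw.1.1 (by omega)
    rw [hempty, measure_empty, ENNReal.toReal_zero, h0 _ (by omega), zero_mul]
  · have hset : {ω : ℕ → Bool | waitingTime k ω = v}
        = {ω : ℕ → Bool | mRun k v ω ∧ mNR k (v - 1) ω} := by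
      ext ω
      simp only [Set.mem_setOf_eq]
      rw [waitingTime, mInf_eq_iff hv]
      constructor
      · rintro ⟨⟨hkv, hrun⟩, hmin⟩
        exact ⟨hrun, fun n hkn hn hrun' => hmin n (by omega) ⟨hkn, hrun'⟩⟩
      · rintro ⟨hrun, hnr⟩
        exact ⟨⟨hvk, hrun⟩, fun m hm hmem => hnr m hmem.1 (by omega) hmem.2⟩
    rw [hset, mF_meas hp0 hp1 hα0 hα1 hβ0 hβ1 μ hμ' (by omega : 1 ≤ v)
      (mDep_and mDep_run (mDep_mono (by omega) mDep_nr))]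
    rcases eq_or_lt_of_le hvk with hvk' | hvk2
    · subst hvk'
      rw [mF_congr (Q' := fun ω => ∀ i, 1 ≤ i → i ≤ k → ω i = true)]
      · rw [mF_allones k (by omega), show (k : ℤ) - k + 1 = 1 from by ring, h1]
      · intro ω
        constructor
        · rintro ⟨hrun, -⟩ i h1' h2'
          exact hrun i (by simp [Finset.mem_Icc]; omega)
        · intro hones
          refine ⟨?_, ?_⟩
          · intro i hi
            simp only [Finset.mem_Icc] at hi
            exact hones i (by omega) (by omega)
          · intro n hkn hn
            omega
    · obtain ⟨s, hs1, rfl⟩ : ∃ s, 1 ≤ s ∧ v = s + k := ⟨v - k, by omega, by omega⟩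
      rw [mF_congr (Q' := fun ω => (fun ω => mNR k s ω ∧ ω s = false) ω
        ∧ ∀ i, s + 1 ≤ i → i ≤ s + k → ω i = true)]
      · rw [mF_ones hs1 (mDep_and mDep_nr (mDep_eq hs1 le_rfl)) (fun ω hq => hq.2) k hk]
        have := mC hk h h0 h1 h2 hrec s hs1
        rw [show ((s + k : ℕ) : ℤ) - k + 1 = (s : ℤ) + 1 from by push_cast; ring, ← this]
        ring
      · intro ω
        rw [mEP hk (by omega) ω]
        have hsk : s + k - k = s := by omega
        rw [hsk]
        constructor
        · rintro ⟨hnr, hz, hones⟩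
          exact ⟨⟨hnr, hz⟩, fun i hi1 hi2 => hones i (by omega) hi2⟩
        · rintro ⟨⟨hnr, hz⟩, hones⟩
          exact ⟨hnr, hz, fun i hi1 hi2 => hones i (by omega) hi2⟩
end

section
/- Let R₁ = (β + √(β² + 4(1−α)(1−β)))/2 and R₂ = (β − √(β² + 4(1−α)(1−β)))/2 (the roots of x² = βx + (1−α)(1−β)). Then for every integer v ≥ 2, P(V(2) = v) = α·[(p·R₁ + q − β)·R₁^{v−2} − (q(1−β) − p·R₁)·R₂^{v−2}]/(R₁ − R₂). -/
open MeasureTheory Finset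

noncomputable instance : DecidableEq (ℕ → Bool) := Classical.decEq _

def tw (α β : ℝ) (x y : Bool) : ℝ :=
  if x = true then (if y = true then α else 1 - α)
  else (if y = true then 1 - β else β)

def W (p α β : ℝ) (n : ℕ) (b : ℕ → Bool) : ℝ :=
  (if b 1 = true then p else 1 - p) *
    ∏ i ∈ Finset.Icc 1 (n - 1), tw α β (b i) (b (i + 1))

noncomputable def Pats : ℕ → Finset (ℕ → Bool)
  | 0 => {fun _ => false}
  | (m + 1) => (Pats m).biUnion fun b => {b, Function.update b (m + 1) true}

lemma Pats_support : ∀ m, ∀ b ∈ Pats m, ∀ i, b i = true → 1 ≤ i ∧ i ≤ m := by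
  intro m
  induction m with
  | zero =>
      intro b hb i hi
      simp only [Pats, Finset.mem_singleton] at hb
      subst hb; simp at hi
  | succ m ih =>
      intro b hb i hi
      simp only [Pats, Finset.mem_biUnion, Finset.mem_insert, Finset.mem_singleton] at hb
      obtain ⟨c, hc, hbc⟩ := hb
      rcases hbc with rfl | rfl
      · have := ih b hc i hi; omega
      · by_cases h : i = m + 1
        · omega
        · rw [Function.update_of_ne h] at hi
          have := ih c hc i hi; omega

lemma Pats_ext {m : ℕ} {b c : ℕ → Bool} (hb : b ∈ Pats m) (hc : c ∈ Pats m)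
    (h : ∀ i, 1 ≤ i → i ≤ m → b i = c i) : b = c := by
  funext i
  by_cases hi : 1 ≤ i ∧ i ≤ m
  · exact h i hi.1 hi.2
  · have h1 : b i ≠ true → b i = false := by simp
    have hbf : b i = false := by
      by_contra hbt
      have : b i = true := by revert hbt; cases b i <;> simp
      exact hi (Pats_support m b hb i this)
    have hcf : c i = false := by
      by_contra hct
      have : c i = true := by revert hct; cases c i <;> simp
      exact hi (Pats_support m c hc i this)
    rw [hbf, hcf]

/-- truncation -/
def trunc (m : ℕ) (ω : ℕ → Bool) : ℕ → Bool :=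
  fun i => if 1 ≤ i ∧ i ≤ m then ω i else false

lemma trunc_mem (m : ℕ) (ω : ℕ → Bool) : trunc m ω ∈ Pats m := by
  induction m with
  | zero =>
      simp only [Pats, Finset.mem_singleton]
      funext i; simp [trunc]; omega
  | succ m ih =>
      simp only [Pats, Finset.mem_biUnion, Finset.mem_insert, Finset.mem_singleton]
      refine ⟨trunc m ω, ih, ?_⟩
      by_cases h : ω (m + 1) = true
      · right
        funext i
        by_cases hi : i = m + 1
        · subst hi; rw [Function.update_self]; simp [trunc, h]
        · rw [Function.update_of_ne hi]
          simp only [trunc]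
          by_cases h1 : 1 ≤ i ∧ i ≤ m
          · have : 1 ≤ i ∧ i ≤ m + 1 := ⟨h1.1, by omega⟩
            simp [h1, this]
          · have : ¬(1 ≤ i ∧ i ≤ m + 1) := by omega
            simp [h1, this]
      · left
        funext i
        simp only [trunc]
        by_cases h1 : 1 ≤ i ∧ i ≤ m
        · have : 1 ≤ i ∧ i ≤ m + 1 := ⟨h1.1, by omega⟩
          simp [h1, this]
        · by_cases h2 : 1 ≤ i ∧ i ≤ m + 1
          · have : i = m + 1 := by omega
            subst this
            simp [h1, h2]
            exact Bool.of_not_eq_true h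
          · simp [h1, h2]

lemma update_ne_self {m : ℕ} {b : ℕ → Bool} (hb : b ∈ Pats m) :
    b ≠ Function.update b (m + 1) true := by
  intro h
  have h1 : b (m + 1) = true := by
    conv_lhs => rw [h]
    rw [Function.update_self]
  have := Pats_support m b hb (m + 1) h1
  omega

lemma sum_split (m : ℕ) (F : (ℕ → Bool) → ℝ) :
    ∑ c ∈ Pats (m + 1), F c
      = ∑ b ∈ Pats m, (F b + F (Function.update b (m + 1) true)) := by
  show ∑ c ∈ (Pats m).biUnion _, F c = _
  rw [Finset.sum_biUnion]
  · refine Finset.sum_congr rfl fun b hb => ?_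
    rw [Finset.sum_pair (update_ne_self hb)]
  · intro b hb c hc hbc
    simp only [Finset.disjoint_left, Finset.mem_insert, Finset.mem_singleton]
    rintro x (rfl | rfl) hx
    · rcases hx with rfl | h
      · exact hbc rfl
      · have : x (m + 1) = true := by rw [h, Function.update_self]
        have := Pats_support m x hb (m + 1) this
        omega
    · rcases hx with h | h
      · have : c (m + 1) = true := by rw [← h, Function.update_self]
        have := Pats_support m c hc (m + 1) this
        omega
      · apply hbc
        apply Pats_ext hb hc
        intro i h1 hi
        have hne : i ≠ m + 1 := by omega
        have := congrFun h i
        rwa [Function.update_of_ne hne, Function.update_of_ne hne] at this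

lemma W_succ (p α β : ℝ) (k : ℕ) (b : ℕ → Bool) :
    W p α β (k + 2) b = W p α β (k + 1) b * tw α β (b (k + 1)) (b (k + 2)) := by
  unfold W
  have h1 : k + 2 - 1 = (k) + 1 := by omega
  have h2 : k + 1 - 1 = k := by omega
  rw [h1, h2, Finset.prod_Icc_succ_top (by omega : 1 ≤ k + 1)]
  ring

lemma W_congr (p α β : ℝ) (m : ℕ) (hm : 1 ≤ m) {b c : ℕ → Bool}
    (h : ∀ i, 1 ≤ i → i ≤ m → b i = c i) : W p α β m b = W p α β m c := by
  unfold W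
  rw [h 1 le_rfl hm]
  congr 1
  refine Finset.prod_congr rfl fun i hi => ?_
  rw [Finset.mem_Icc] at hi
  rw [h i hi.1 (by omega), h (i + 1) (by omega) (by omega)]

def noCons (m : ℕ) (b : ℕ → Bool) : Prop :=
  ∀ n ∈ Finset.Icc 2 m, ¬(b (n - 1) = true ∧ b n = true)

instance (m : ℕ) (b : ℕ → Bool) : Decidable (noCons m b) := by
  unfold noCons; infer_instance

lemma noCons_congr (m : ℕ) {b c : ℕ → Bool}
    (h : ∀ i, 1 ≤ i → i ≤ m → b i = c i) : noCons m b ↔ noCons m c := by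
  unfold noCons
  refine forall₂_congr fun n hn => ?_
  rw [Finset.mem_Icc] at hn
  rw [h n (by omega) hn.2, h (n - 1) (by omega) (by omega)]

noncomputable def SA (p α β : ℝ) (m : ℕ) : ℝ :=
  ∑ b ∈ Pats m, (if noCons m b ∧ b m = false then W p α β m b else 0)

noncomputable def SB (p α β : ℝ) (m : ℕ) : ℝ :=
  ∑ b ∈ Pats m, (if noCons m b ∧ b m = true then W p α β m b else 0)

lemma bfalse {m : ℕ} {b : ℕ → Bool} (hb : b ∈ Pats m) {i : ℕ} (hi : ¬(1 ≤ i ∧ i ≤ m)) :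
    b i = false := by
  by_contra hbt
  exact hi (Pats_support m b hb i (by revert hbt; cases b i <;> simp))

lemma noCons_succ {m : ℕ} {b : ℕ → Bool} (hb : b ∈ Pats m) :
    noCons (m + 1) b ↔ noCons m b := by
  unfold noCons
  constructor
  · intro h n hn
    rw [Finset.mem_Icc] at hn
    exact h n (Finset.mem_Icc.2 ⟨hn.1, by omega⟩)
  · intro h n hn
    rw [Finset.mem_Icc] at hn
    by_cases hnm : n = m + 1
    · subst hnm
      have hf : b (m + 1) = false := bfalse hb (by omega)
      simp [hf]
    · exact h n (Finset.mem_Icc.2 ⟨hn.1, by omega⟩)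

lemma noCons_update {m : ℕ} {b : ℕ → Bool} (hb : b ∈ Pats m) :
    noCons (m + 1) (Function.update b (m + 1) true) ↔ noCons m b ∧ b m = false := by
  have hu1 : ∀ i, i ≠ m + 1 → Function.update b (m + 1) true i = b i :=
    fun i hi => Function.update_of_ne hi _ _
  have hu2 : Function.update b (m + 1) true (m + 1) = true := Function.update_self _ _ _
  constructor
  · intro h
    refine ⟨fun n hn => ?_, ?_⟩
    · rw [Finset.mem_Icc] at hn
      have := h n (Finset.mem_Icc.2 ⟨hn.1, by omega⟩)
      rwa [hu1 n (by omega), hu1 (n - 1) (by omega)] at this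
    · by_cases hm : 1 ≤ m
      · have := h (m + 1) (Finset.mem_Icc.2 ⟨by omega, le_rfl⟩)
        rw [hu2] at this
        have h2 : m + 1 - 1 = m := by omega
        rw [h2, hu1 m (by omega)] at this
        simpa using this
      · have hm0 : m = 0 := by omega
        subst hm0; exact bfalse hb (by omega)
  · rintro ⟨h, hbm⟩ n hn
    rw [Finset.mem_Icc] at hn
    by_cases hnm : n = m + 1
    · subst hnm
      have h2 : m + 1 - 1 = m := by omega
      rw [h2, hu1 m (by omega), hu2, hbm]; simp
    · have := h n (Finset.mem_Icc.2 ⟨hn.1, by omega⟩)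
      rwa [hu1 n (by omega), hu1 (n - 1) (by omega)]

lemma Pats_zero_sum (F : (ℕ → Bool) → ℝ) :
    ∑ b ∈ Pats 0, F b = F (fun _ => false) := by
  show ∑ b ∈ ({fun _ => false} : Finset (ℕ → Bool)), F b = _
  rw [Finset.sum_singleton]

lemma W_one (p α β : ℝ) (b : ℕ → Bool) :
    W p α β 1 b = if b 1 = true then p else 1 - p := by
  unfold W
  norm_num

lemma noCons_one (b : ℕ → Bool) : noCons 1 b := by
  intro n hn
  rw [Finset.mem_Icc] at hn
  omega

lemma SA_one (p α β : ℝ) : SA p α β 1 = 1 - p := by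
  unfold SA
  rw [show (1 : ℕ) = 0 + 1 from rfl, sum_split, Pats_zero_sum]
  rw [Function.update_self]
  simp [noCons_one, W_one]

lemma SB_one (p α β : ℝ) : SB p α β 1 = p := by
  unfold SB
  rw [show (1 : ℕ) = 0 + 1 from rfl, sum_split, Pats_zero_sum]
  rw [Function.update_self]
  simp [noCons_one, W_one, Function.update_self]

lemma SA_rec (p α β : ℝ) (k : ℕ) :
    SA p α β (k + 2) = β * SA p α β (k + 1) + (1 - α) * SB p α β (k + 1) := by
  unfold SA SB
  rw [show k + 2 = (k + 1) + 1 from rfl, sum_split, Finset.mul_sum, Finset.mul_sum,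
    ← Finset.sum_add_distrib]
  refine Finset.sum_congr rfl fun b hb => ?_
  have hu : Function.update b (k + 1 + 1) true (k + 1 + 1) = true := Function.update_self _ _ _
  have hF2 : (if noCons (k + 1 + 1) (Function.update b (k + 1 + 1) true)
      ∧ Function.update b (k + 1 + 1) true (k + 1 + 1) = false
      then W p α β (k + 1 + 1) (Function.update b (k + 1 + 1) true) else 0) = 0 := by
    rw [if_neg]; rw [hu]; simp
  rw [hF2, add_zero]
  have hb2 : b (k + 2) = false := bfalse hb (by omega)
  have hW : W p α β (k + 2) b = W p α β (k + 1) b * tw α β (b (k + 1)) (b (k + 2)) :=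
    W_succ p α β k b
  have hnc : noCons (k + 1 + 1) b ↔ noCons (k + 1) b := noCons_succ hb
  by_cases h1 : noCons (k + 1) b
  · by_cases h2 : b (k + 1) = true
    · rw [if_pos ⟨hnc.2 h1, hb2⟩, hW, hb2, h2, if_neg (by simp [h2]), if_pos ⟨h1, rfl⟩]
      simp [tw]; ring
    · have h2' : b (k + 1) = false := by revert h2; cases b (k + 1) <;> simp
      rw [if_pos ⟨hnc.2 h1, hb2⟩, hW, hb2, h2', if_pos ⟨h1, rfl⟩, if_neg (by simp [h2'])]
      simp [tw]; ring
  · rw [if_neg (by rw [hnc]; tauto), if_neg (by tauto), if_neg (by tauto)]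
    ring

lemma SB_rec (p α β : ℝ) (k : ℕ) :
    SB p α β (k + 2) = (1 - β) * SA p α β (k + 1) := by
  unfold SA SB
  rw [show k + 2 = (k + 1) + 1 from rfl, sum_split, Finset.mul_sum]
  refine Finset.sum_congr rfl fun b hb => ?_
  have hb2 : b (k + 2) = false := bfalse hb (by omega)
  have hF1 : (if noCons (k + 1 + 1) b ∧ b (k + 1 + 1) = true
      then W p α β (k + 1 + 1) b else 0) = 0 := by
    rw [if_neg]; rw [show k + 1 + 1 = k + 2 from rfl, hb2]; simp
  rw [hF1, zero_add]
  set u := Function.update b (k + 1 + 1) true with hu_def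
  have hu : u (k + 1 + 1) = true := Function.update_self _ _ _
  have hagree : ∀ i, 1 ≤ i → i ≤ k + 1 → u i = b i := by
    intro i h1 hi
    rw [hu_def, Function.update_of_ne (by omega)]
  have hWu : W p α β (k + 2) u = W p α β (k + 1) b * tw α β (b (k + 1)) true := by
    rw [W_succ p α β k u, W_congr p α β (k + 1) (by omega) hagree,
      hagree (k + 1) (by omega) le_rfl, show k + 1 + 1 = k + 2 from rfl] at *
    rw [hu]
  have hnc : noCons (k + 1 + 1) u ↔ noCons (k + 1) b ∧ b (k + 1) = false := noCons_update hb
  by_cases h1 : noCons (k + 1) b ∧ b (k + 1) = false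
  · rw [if_pos ⟨hnc.2 h1, hu⟩, if_pos h1, show k + 1 + 1 = k + 2 from rfl, hWu, h1.2]
    simp [tw]; ring
  · rw [if_neg (by rw [hnc]; tauto), if_neg (by tauto)]
    ring

noncomputable def hseq (p α β : ℝ) : ℕ → ℝ
  | 0 => p
  | 1 => (1 - β) * (1 - p)
  | (n + 2) => β * hseq p α β (n + 1) + (1 - α) * (1 - β) * hseq p α β n

lemma SA_hseq (p α β : ℝ) : ∀ k : ℕ,
    (1 - β) * SA p α β (k + 1) = hseq p α β (k + 1) ∧ SB p α β (k + 1) = hseq p α β k := by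
  intro k
  induction k with
  | zero => constructor
            · rw [SA_one]; rfl
            · rw [SB_one]; rfl
  | succ k ih =>
      constructor
      · rw [SA_rec, show hseq p α β (k + 1 + 1) = β * hseq p α β (k + 1)
          + (1 - α) * (1 - β) * hseq p α β k from rfl, ← ih.1, ← ih.2]
        ring
      · rw [SB_rec, ih.1]

lemma hseq_closed (p α β R₁ R₂ : ℝ) (hsum : R₁ + R₂ = β)
    (hprod : R₁ * R₂ = -((1 - α) * (1 - β))) : ∀ m : ℕ,
    hseq p α β m * (R₁ - R₂)
      = (p * R₁ + (1 - p) - β) * R₁ ^ m - ((1 - p) * (1 - β) - p * R₁) * R₂ ^ m := by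
  have e₁ : R₁ ^ 2 = β * R₁ + (1 - α) * (1 - β) := by linear_combination R₁ * hsum - hprod
  have e₂ : R₂ ^ 2 = β * R₂ + (1 - α) * (1 - β) := by linear_combination R₂ * hsum - hprod
  intro m
  induction m using Nat.strong_induction_on with
  | _ m ih =>
    match m with
    | 0 =>
        show p * (R₁ - R₂) = _
        simp only [pow_zero, mul_one]
        linear_combination (-p) * hsum
    | 1 =>
        show (1 - β) * (1 - p) * (R₁ - R₂) = _
        simp only [pow_one]
        linear_combination (-p) * e₁ - p * hprod
    | (n + 2) =>
        show (β * hseq p α β (n + 1) + (1 - α) * (1 - β) * hseq p α β n) * (R₁ - R₂) = _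
        have ih1 := ih (n + 1) (by omega)
        have ih2 := ih n (by omega)
        linear_combination β * ih1 + (1 - α) * (1 - β) * ih2
          - ((p * R₁ + (1 - p) - β) * R₁ ^ n) * e₁
          + (((1 - p) * (1 - β) - p * R₁) * R₂ ^ n) * e₂

def good (v : ℕ) (b : ℕ → Bool) : Prop :=
  b (v - 1) = true ∧ b v = true ∧ ∀ n ∈ Finset.Ico 2 v, ¬(b (n - 1) = true ∧ b n = true)

instance (v : ℕ) (b : ℕ → Bool) : Decidable (good v b) := by
  unfold good; infer_instance

lemma f_two (p α β : ℝ) :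
    ∑ b ∈ Pats 2, (if good 2 b then W p α β 2 b else 0) = p * α := by
  rw [show (2 : ℕ) = 1 + 1 from rfl, sum_split, show (1 : ℕ) = 0 + 1 from rfl, sum_split,
    Pats_zero_sum]
  have hW : ∀ b : ℕ → Bool, W p α β 2 b
      = (if b 1 = true then p else 1 - p) * tw α β (b 1) (b 2) := by
    intro b
    unfold W
    norm_num
  simp only [good, hW]
  norm_num [Function.update]
  simp [tw]

lemma f_splice (p α β : ℝ) (k : ℕ) :
    ∑ b ∈ Pats (k + 3), (if good (k + 3) b then W p α β (k + 3) b else 0)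
      = α * (1 - β) * SA p α β (k + 1) := by
  rw [show k + 3 = (k + 2) + 1 from rfl, sum_split,
    show k + 2 = (k + 1) + 1 from rfl, sum_split]
  unfold SA
  rw [Finset.mul_sum]
  refine Finset.sum_congr rfl fun b hb => ?_
  have hb2 : b (k + 2) = false := bfalse hb (by omega)
  have hb3 : b (k + 3) = false := bfalse hb (by omega)
  set u2 := Function.update b (k + 1 + 1) true with hu2_def
  set c := Function.update u2 (k + 1 + 1 + 1) true with hc_def
  have hu2_eq : ∀ i, i ≠ k + 2 → u2 i = b i := fun i hi => Function.update_of_ne hi _ _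
  have hu2_top : u2 (k + 2) = true := Function.update_self _ _ _
  have hc_eq : ∀ i, i ≠ k + 3 → c i = u2 i := fun i hi => Function.update_of_ne hi _ _
  have hc3 : c (k + 3) = true := Function.update_self _ _ _
  have hc2 : c (k + 2) = true := by rw [hc_eq _ (by omega)]; exact hu2_top
  have hcb : ∀ i, 1 ≤ i → i ≤ k + 1 → c i = b i := by
    intro i h1 hi
    rw [hc_eq _ (by omega), hu2_eq _ (by omega)]
  -- first term : good needs b (k+3) = true, impossible
  have t1 : (if good (k + 2 + 1) b then W p α β (k + 2 + 1) b else 0) = 0 := by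
    rw [if_neg]
    rintro ⟨-, hg, -⟩
    rw [show k + 2 + 1 = k + 3 from by omega, hb3] at hg
    exact absurd hg (by simp)
  -- second term : update b at (k+3); value at k+2 is b (k+2) = false
  have t2 : (if good (k + 2 + 1) (Function.update b (k + 2 + 1) true)
      then W p α β (k + 2 + 1) (Function.update b (k + 2 + 1) true) else 0) = 0 := by
    rw [if_neg]
    rintro ⟨hg, -, -⟩
    rw [show k + 2 + 1 - 1 = k + 2 from by omega,
      Function.update_of_ne (by omega : k + 2 ≠ k + 2 + 1), hb2] at hg
    exact absurd hg (by simp)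
  -- third term : u2, value at k+3 is b (k+3) = false
  have t3 : (if good (k + 2 + 1) u2 then W p α β (k + 2 + 1) u2 else 0) = 0 := by
    rw [if_neg]
    rintro ⟨-, hg, -⟩
    rw [hu2_eq _ (by omega), show k + 2 + 1 = k + 3 from by omega, hb3] at hg
    exact absurd hg (by simp)
  rw [t1, t2, t3]
  simp only [zero_add, add_zero]
  -- main term
  have hgood : good (k + 2 + 1) c ↔ noCons (k + 1) b ∧ b (k + 1) = false := by
    constructor
    · intro hg
      constructor
      · intro n hn
        rw [Finset.mem_Icc] at hn
        have := hg.2.2 n (Finset.mem_Ico.2 ⟨hn.1, by omega⟩)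
        rwa [hcb n (by omega) (by omega), hcb (n - 1) (by omega) (by omega)] at this
      · have := hg.2.2 (k + 2) (Finset.mem_Ico.2 ⟨by omega, by omega⟩)
        rw [show k + 2 - 1 = k + 1 from rfl, hcb (k + 1) (by omega) le_rfl, hc2] at this
        simpa using this
    · rintro ⟨hnc, hk1⟩
      refine ⟨?_, ?_, ?_⟩
      · rw [show k + 2 + 1 - 1 = k + 2 from rfl]; exact hc2
      · exact hc3
      · intro n hn
        rw [Finset.mem_Ico] at hn
        by_cases hn2 : n = k + 2
        · subst hn2
          rw [show k + 2 - 1 = k + 1 from rfl, hcb (k + 1) (by omega) le_rfl, hk1]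
          simp
        · have := hnc n (Finset.mem_Icc.2 ⟨hn.1, by omega⟩)
          rwa [hcb n (by omega) (by omega), hcb (n - 1) (by omega) (by omega)]
  by_cases hcond : noCons (k + 1) b ∧ b (k + 1) = false
  · rw [if_pos (hgood.2 hcond), if_pos hcond]
    have hWc : W p α β (k + 2 + 1) c = W p α β (k + 1) b * ((1 - β) * α) := by
      rw [show k + 2 + 1 = (k + 1) + 2 from rfl, W_succ,
        show (k + 1) + 2 = k + 3 from rfl, show (k + 1) + 1 = k + 2 from rfl,
        hc2, hc3, show k + 1 + 1 = (k) + 2 from rfl, W_succ,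
        show (k) + 2 = k + 2 from rfl, show (k) + 1 = k + 1 from rfl,
        hc2, hcb (k + 1) (by omega) le_rfl, hcond.2,
        W_congr p α β (k + 1) (by omega) hcb]
      simp [tw]
      ring
    rw [hWc]
    ring
  · rw [if_neg (by rw [hgood]; exact hcond), if_neg hcond]
    ring


lemma wt_mem (ω : ℕ → Bool) (n : ℕ) :
    (n ∈ {n | 2 ≤ n ∧ ∀ i ∈ Finset.Icc (n - 2 + 1) n, ω i = true})
      ↔ (2 ≤ n ∧ ω (n - 1) = true ∧ ω n = true) := by
  simp only [Set.mem_setOf_eq, Finset.mem_Icc]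
  constructor
  · rintro ⟨h1, h2⟩
    exact ⟨h1, h2 (n - 1) (by omega), h2 n (by omega)⟩
  · rintro ⟨h1, h2, h3⟩
    refine ⟨h1, fun i hi => ?_⟩
    have : i = n - 1 ∨ i = n := by omega
    rcases this with rfl | rfl
    · exact h2
    · exact h3

lemma wt_iff (ω : ℕ → Bool) (v : ℕ) (hv : 2 ≤ v) :
    waitingTime 2 ω = v ↔ (ω (v - 1) = true ∧ ω v = true ∧
      ∀ n, 2 ≤ n → n < v → ¬(ω (n - 1) = true ∧ ω n = true)) := by
  unfold waitingTime
  set S := {n | 2 ≤ n ∧ ∀ i ∈ Finset.Icc (n - 2 + 1) n, ω i = true} with hS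
  constructor
  · intro hw
    have hne : S.Nonempty := by
      by_contra h
      rw [Set.not_nonempty_iff_eq_empty] at h
      rw [h, Nat.sInf_empty] at hw
      omega
    have hvS : v ∈ S := hw ▸ Nat.sInf_mem hne
    rw [wt_mem] at hvS
    refine ⟨hvS.2.1, hvS.2.2, fun n h2 hn hcon => ?_⟩
    have : n ∉ S := Nat.notMem_of_lt_sInf (hw ▸ hn)
    rw [wt_mem] at this
    exact this ⟨h2, hcon.1, hcon.2⟩
  · rintro ⟨h1, h2, h3⟩
    have hvS : v ∈ S := (wt_mem ω v).2 ⟨hv, h1, h2⟩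
    refine le_antisymm (Nat.sInf_le hvS) (le_csInf ⟨v, hvS⟩ fun m hm => ?_)
    by_contra h
    push_neg at h
    rw [wt_mem] at hm
    exact h3 m hm.1 h ⟨hm.2.1, hm.2.2⟩

def cyl (n : ℕ) (b : ℕ → Bool) : Set (ℕ → Bool) := {ω | ∀ i, 1 ≤ i → i ≤ n → ω i = b i}

lemma cyl_measurable_s10 (n : ℕ) (b : ℕ → Bool) : MeasurableSet (cyl n b) := by
  have : cyl n b = ⋂ i ∈ Finset.Icc 1 n, {ω : ℕ → Bool | ω i = b i} := by
    ext ω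
    simp only [cyl, Set.mem_setOf_eq, Set.mem_iInter, Finset.mem_Icc]
    exact ⟨fun h i hi => h i hi.1 hi.2, fun h i h1 h2 => h i ⟨h1, h2⟩⟩
  rw [this]
  refine Finset.measurableSet_biInter _ fun i _ => ?_
  have h : MeasurableSet ((fun ω : ℕ → Bool => ω i) ⁻¹' {b i}) :=
    (measurable_pi_apply i) (measurableSet_singleton (b i))
  exact h

lemma trunc_agree (m : ℕ) (ω : ℕ → Bool) : ∀ i, 1 ≤ i → i ≤ m → trunc m ω i = ω i := by
  intro i h1 h2
  simp [trunc, h1, h2]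

lemma event_eq (v : ℕ) (hv : 2 ≤ v) :
    {ω : ℕ → Bool | waitingTime 2 ω = v}
      = ⋃ b ∈ ((Pats v).filter (good v)), cyl v b := by
  ext ω
  simp only [Set.mem_setOf_eq, Set.mem_iUnion, Finset.mem_filter, exists_prop]
  rw [wt_iff ω v hv]
  constructor
  · rintro ⟨h1, h2, h3⟩
    refine ⟨trunc v ω, ⟨trunc_mem v ω, ?_, ?_, ?_⟩, ?_⟩
    · rw [trunc_agree v ω (v - 1) (by omega) (by omega)]; exact h1
    · rw [trunc_agree v ω v (by omega) le_rfl]; exact h2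
    · intro n hn
      rw [Finset.mem_Ico] at hn
      rw [trunc_agree v ω (n - 1) (by omega) (by omega),
        trunc_agree v ω n (by omega) (by omega)]
      exact h3 n hn.1 hn.2
    · intro i h1' h2'
      exact (trunc_agree v ω i h1' h2').symm
  · rintro ⟨b, ⟨hb, g1, g2, g3⟩, hcyl⟩
    refine ⟨?_, ?_, ?_⟩
    · rw [hcyl (v - 1) (by omega) (by omega)]; exact g1
    · rw [hcyl v (by omega) le_rfl]; exact g2
    · intro n h2 hn
      rw [hcyl (n - 1) (by omega) (by omega), hcyl n (by omega) (by omega)]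
      exact g3 n (Finset.mem_Ico.2 ⟨h2, hn⟩)

lemma tw_nonneg {α β : ℝ} (hα0 : 0 < α) (hα1 : α < 1) (hβ0 : 0 < β) (hβ1 : β < 1)
    (x y : Bool) : 0 ≤ tw α β x y := by
  unfold tw
  split_ifs <;> linarith

lemma W_nonneg {p α β : ℝ} (hp0 : 0 < p) (hp1 : p < 1)
    (hα0 : 0 < α) (hα1 : α < 1) (hβ0 : 0 < β) (hβ1 : β < 1) (n : ℕ) (b : ℕ → Bool) :
    0 ≤ W p α β n b := by
  unfold W
  apply mul_nonneg
  · split_ifs <;> linarith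
  · exact Finset.prod_nonneg fun i _ => tw_nonneg hα0 hα1 hβ0 hβ1 _ _

lemma measure_event {p α β : ℝ} (μ : Measure (ℕ → Bool))
    (hμ : ∀ (n : ℕ), 1 ≤ n → ∀ (b : ℕ → Bool),
      μ {ω | ∀ i, 1 ≤ i → i ≤ n → ω i = b i}
        = ENNReal.ofReal ((if b 1 = true then p else 1 - p) *
            ∏ i ∈ Finset.Icc 1 (n - 1),
              (if b i = true then (if b (i + 1) = true then α else 1 - α)
               else (if b (i + 1) = true then 1 - β else β))))
    (v : ℕ) (hv : 2 ≤ v) :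
    μ {ω | waitingTime 2 ω = v}
      = ∑ b ∈ ((Pats v).filter (good v)), ENNReal.ofReal (W p α β v b) := by
  rw [event_eq v hv]
  rw [measure_biUnion_finset ?disj fun b _ => cyl_measurable_s10 v b]
  case disj =>
    intro b hb c hc hbc
    rw [Finset.mem_coe, Finset.mem_filter] at hb hc
    rw [Function.onFun]
    rw [Set.disjoint_left]
    intro ω hωb hωc
    apply hbc
    apply Pats_ext hb.1 hc.1
    intro i h1 hi
    rw [← hωb i h1 hi, ← hωc i h1 hi]
  refine Finset.sum_congr rfl fun b _ => ?_
  rw [show cyl v b = {ω | ∀ i, 1 ≤ i → i ≤ v → ω i = b i} from rfl, hμ v (by omega) b]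
  simp only [W, tw]

theorem stmt10 (p α β : ℝ) (hp0 : 0 < p) (hp1 : p < 1)
    (hα0 : 0 < α) (hα1 : α < 1) (hβ0 : 0 < β) (hβ1 : β < 1)
    (μ : Measure (ℕ → Bool)) [IsProbabilityMeasure μ]
    -- μ is the law of the two-state Markov chain with initial distribution
    -- `P(X₁ = 1) = p`, `P(X₁ = 0) = 1 - p` and transition probabilities
    -- `P(1 → 1) = α`, `P(1 → 0) = 1 - α`, `P(0 → 0) = β`, `P(0 → 1) = 1 - β`.
    (hμ : ∀ (n : ℕ), 1 ≤ n → ∀ (b : ℕ → Bool),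
      μ {ω | ∀ i, 1 ≤ i → i ≤ n → ω i = b i}
        = ENNReal.ofReal ((if b 1 = true then p else 1 - p) *
            ∏ i ∈ Finset.Icc 1 (n - 1),
              (if b i = true then (if b (i + 1) = true then α else 1 - α)
               else (if b (i + 1) = true then 1 - β else β))))
    (R₁ R₂ : ℝ)
    (hR₁ : R₁ = (β + Real.sqrt (β ^ 2 + 4 * (1 - α) * (1 - β))) / 2)
    (hR₂ : R₂ = (β - Real.sqrt (β ^ 2 + 4 * (1 - α) * (1 - β))) / 2) :
    ∀ v : ℕ, 2 ≤ v →
      (μ {ω | waitingTime 2 ω = v}).toReal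
        = α * ((p * R₁ + (1 - p) - β) * R₁ ^ (v - 2)
            - ((1 - p) * (1 - β) - p * R₁) * R₂ ^ (v - 2)) / (R₁ - R₂) := by
  intro v hv
  rw [measure_event μ hμ v hv,
    ← ENNReal.ofReal_sum_of_nonneg (fun b _ => W_nonneg hp0 hp1 hα0 hα1 hβ0 hβ1 v b),
    ENNReal.toReal_ofReal
      (Finset.sum_nonneg fun b _ => W_nonneg hp0 hp1 hα0 hα1 hβ0 hβ1 v b),
    Finset.sum_filter]
  set s := Real.sqrt (β ^ 2 + 4 * (1 - α) * (1 - β)) with hs_def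
  have hD : 0 < β ^ 2 + 4 * (1 - α) * (1 - β) := by nlinarith
  have hs2 : s ^ 2 = β ^ 2 + 4 * (1 - α) * (1 - β) := Real.sq_sqrt hD.le
  have hspos : 0 < s := Real.sqrt_pos.2 hD
  have hsum : R₁ + R₂ = β := by rw [hR₁, hR₂]; ring
  have hdiff : R₁ - R₂ = s := by rw [hR₁, hR₂]; ring
  have hne : R₁ - R₂ ≠ 0 := by rw [hdiff]; exact ne_of_gt hspos
  have hprod : R₁ * R₂ = -((1 - α) * (1 - β)) := by
    rw [hR₁, hR₂]; linear_combination (-1 / 4) * hs2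
  have hcl := hseq_closed p α β R₁ R₂ hsum hprod
  rcases lt_or_ge v 3 with h3 | h3
  · have hv2 : v = 2 := by omega
    subst hv2
    rw [f_two]
    have h0 := hcl 0
    rw [show hseq p α β 0 = p from rfl, pow_zero, pow_zero, mul_one, mul_one] at h0
    rw [show (2 : ℕ) - 2 = 0 from rfl, pow_zero, pow_zero, mul_one, mul_one, ← h0,
      mul_div_assoc, mul_div_assoc, div_self hne]
    ring
  · obtain ⟨k, rfl⟩ : ∃ k, v = k + 3 := ⟨v - 3, by omega⟩
    rw [f_splice]
    have hSA := (SA_hseq p α β k).1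
    rw [show k + 3 - 2 = k + 1 from by omega, ← hcl (k + 1),
      mul_div_assoc, mul_div_cancel_right₀ _ hne, ← hSA]
    ring
end

section
/- Fix an integer k ≥ 1. For every integer x ≥ k + 2, P(V(k) = x) = q·p^k·P(L_{x−k−1} < k). -/
open MeasureTheory Finset

/-- Length of the longest run of consecutive successes among trials `1, …, n`. -/
noncomputable def longestRun (n : ℕ) (ω : ℕ → Bool) : ℕ :=
  sSup {m | ∃ j, j + m ≤ n ∧ ∀ i ∈ Finset.Ioc j (j + m), ω i = true}

/-!
The event `{V(k) = m + k + 1}` says: no run of `k` successes among trials `1, …, m`, a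
failure at trial `m + 1` and successes at trials `m + 2, …, m + k + 1`. The first condition only
involves trials `1, …, m`, and for such an event `A` the measure of `A` intersected with a fixed
pattern of later trials factorizes: `A` is a finite disjoint union of cylinders over trials
`1, …, m`, and the product formula for the measure of a cylinder splits along the two blocks.
-/

theorem Nat.sInf_eq_iff_isLeast {s : Set ℕ} {x : ℕ} (hx : x ≠ 0) :
    sInf s = x ↔ IsLeast s x := by
  refine ⟨fun h => ?_, IsLeast.csInf_eq⟩
  subst h
  exact ⟨Nat.sInf_mem (Nat.nonempty_of_pos_sInf (Nat.pos_of_ne_zero hx)),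
    fun _ hy => Nat.sInf_le hy⟩

def runEnds (k : ℕ) (ω : ℕ → Bool) : Set ℕ :=
  {n | k ≤ n ∧ ∀ i ∈ Icc (n - k + 1) n, ω i = true}

theorem waitingTime_eq_iff_isLeast {k x : ℕ} (hx : x ≠ 0) (ω : ℕ → Bool) :
    waitingTime k ω = x ↔ IsLeast (runEnds k ω) x :=
  Nat.sInf_eq_iff_isLeast hx

theorem le_longestRun_iff {k n : ℕ} {ω : ℕ → Bool} :
    k ≤ longestRun n ω ↔ ∃ j ≤ n, j ∈ runEnds k ω := by
  set R := {m | ∃ j, j + m ≤ n ∧ ∀ i ∈ Ioc j (j + m), ω i = true}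
  have hbdd : BddAbove R := ⟨n, fun m ⟨j, hj, _⟩ => by omega⟩
  constructor
  · intro hk
    obtain ⟨j, hjn, hrun⟩ : longestRun n ω ∈ R := Nat.sSup_mem ⟨0, 0, by simp⟩ hbdd
    refine ⟨j + longestRun n ω, hjn, by omega, fun i hi => hrun i ?_⟩
    simp only [mem_Icc, mem_Ioc] at hi ⊢
    omega
  · rintro ⟨j, hjn, hkj, hrun⟩
    refine le_csSup hbdd ⟨j - k, by omega, fun i hi => hrun i ?_⟩
    simp only [mem_Icc, mem_Ioc] at hi ⊢
    omega

theorem longestRun_lt_iff {k n : ℕ} {ω : ℕ → Bool} :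
    longestRun n ω < k ↔ ∀ j ≤ n, j ∉ runEnds k ω := by
  simpa using le_longestRun_iff.not

theorem longestRun_dependsOn (n : ℕ) : DependsOn (longestRun n) (Icc 1 n : Set ℕ) := by
  intro ω ω' h
  unfold longestRun
  congr 1
  ext m
  refine exists_congr fun j => and_congr_right fun hj => forall₂_congr fun i hi => ?_
  simp only [mem_Ioc] at hi
  rw [h i (by simp only [coe_Icc, Set.mem_Icc]; omega)]

theorem waitingTime_eq_iff {k m : ℕ} {ω : ℕ → Bool} :
    waitingTime k ω = m + k + 1 ↔
      longestRun m ω < k ∧ ∀ i ∈ Ioc m (m + k + 1), ω i = decide (i ≠ m + 1) := by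
  rw [waitingTime_eq_iff_isLeast (by omega), longestRun_lt_iff]
  constructor
  · rintro ⟨⟨-, hrun⟩, hleast⟩
    have hbefore : ∀ j < m + k + 1, j ∉ runEnds k ω := fun j hj hjS => by
      have := hleast hjS; omega
    have hk : k ≠ 0 := by
      rintro rfl
      exact hbefore 0 (by omega) ⟨le_rfl, by simp⟩
    refine ⟨fun j hj => hbefore j (by omega), fun i hi => ?_⟩
    simp only [mem_Ioc, mem_Icc] at hi hrun
    obtain rfl | hi' := eq_or_ne i (m + 1)
    · by_contra hsucc
      refine hbefore (m + k) (by omega) ⟨by omega, fun j hj => ?_⟩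
      simp only [mem_Icc] at hj
      obtain rfl | hj' := eq_or_ne j (m + 1)
      · simpa using hsucc
      · exact hrun j (by omega)
    · simpa [hi'] using hrun i (by omega)
  · rintro ⟨hbefore, hblock⟩
    have hfail := hblock (m + 1) (by simp)
    refine ⟨⟨by omega, fun i hi => ?_⟩, fun j ⟨hkj, hrun⟩ => ?_⟩
    · simp only [mem_Icc] at hi
      simpa [show i ≠ m + 1 by omega] using hblock i (by simp only [mem_Ioc]; omega)
    · by_contra! hj
      by_cases hjm : j ≤ m
      · exact hbefore j hjm ⟨hkj, hrun⟩
      · simpa [hfail] using hrun (m + 1) (by simp only [mem_Icc]; omega)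

def prefixCylinder (n : ℕ) (b : ℕ → Bool) : Set (ℕ → Bool) :=
  {ω | ∀ i, 1 ≤ i → i ≤ n → ω i = b i}

def successes (n : ℕ) (ω : ℕ → Bool) : Finset ℕ :=
  {i ∈ Icc 1 n | ω i = true}

theorem measurableSet_prefixCylinder (n : ℕ) (b : ℕ → Bool) :
    MeasurableSet (prefixCylinder n b) := by
  unfold prefixCylinder
  measurability

theorem measurableSet_block (m n : ℕ) (c : ℕ → Bool) :
    MeasurableSet {ω : ℕ → Bool | ∀ i ∈ Ioc m n, ω i = c i} := by
  measurability

theorem decide_mem_successes {n i : ℕ} (hi : i ∈ Icc 1 n) (ω : ℕ → Bool) :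
    decide (i ∈ successes n ω) = ω i := by
  cases h : ω i <;> simp [successes, hi, h]

theorem successes_preimage_singleton {n : ℕ} {s : Finset ℕ} (hs : s ⊆ Icc 1 n) :
    successes n ⁻¹' {s} = prefixCylinder n fun i => decide (i ∈ s) := by
  ext ω
  simp only [Set.mem_preimage, Set.mem_singleton_iff, prefixCylinder, Set.mem_ofPred_eq]
  constructor
  · rintro rfl i h1 h2
    exact (decide_mem_successes (mem_Icc.2 ⟨h1, h2⟩) ω).symm
  · intro h
    ext i
    by_cases hi : i ∈ Icc 1 n
    · rw [← decide_eq_decide, decide_mem_successes hi, h i (mem_Icc.1 hi).1 (mem_Icc.1 hi).2]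
    · exact iff_of_false (fun h' => hi (filter_subset _ _ h')) (fun h' => hi (hs h'))

theorem exists_eq_preimage_successes {n : ℕ} {A : Set (ℕ → Bool)}
    (hA : DependsOn (· ∈ A) (Icc 1 n : Set ℕ)) :
    ∃ S ⊆ (Icc 1 n).powerset, A = successes n ⁻¹' S := by
  classical
  refine ⟨{s ∈ (Icc 1 n).powerset | (fun i => decide (i ∈ s)) ∈ A}, filter_subset _ _, ?_⟩
  ext ω
  simp only [Set.mem_preimage, coe_filter, mem_powerset, Set.mem_ofPred_eq]
  refine (and_iff_right (filter_subset _ _)).symm.trans (and_congr_right fun _ => ?_)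
  exact Iff.of_eq (hA fun i hi => (decide_mem_successes hi ω).symm)

theorem measure_preimage_successes_inter (μ : Measure (ℕ → Bool)) {n : ℕ}
    {S : Finset (Finset ℕ)} (hS : S ⊆ (Icc 1 n).powerset) {C : Set (ℕ → Bool)}
    (hC : MeasurableSet C) :
    μ (successes n ⁻¹' S ∩ C)
      = ∑ s ∈ S, μ (prefixCylinder n (fun i => decide (i ∈ s)) ∩ C) := by
  have hfiber : ∀ s ∈ S, successes n ⁻¹' {s} = prefixCylinder n fun i => decide (i ∈ s) :=
    fun s hs => successes_preimage_singleton (mem_powerset.1 (hS hs))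
  rw [← Measure.restrict_apply' hC, ← sum_measure_preimage_singleton S fun s hs => by
    rw [hfiber s hs]; exact measurableSet_prefixCylinder n _]
  exact sum_congr rfl fun s hs => by rw [Measure.restrict_apply' hC, hfiber s hs]

theorem prefixCylinder_inter_block {m n : ℕ} (hmn : m ≤ n) (b c : ℕ → Bool) :
    prefixCylinder m b ∩ {ω | ∀ i ∈ Ioc m n, ω i = c i}
      = prefixCylinder n fun i => if i ≤ m then b i else c i := by
  ext ω
  simp only [prefixCylinder, Set.mem_inter_iff, Set.mem_ofPred_eq, mem_Ioc]
  constructor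
  · rintro ⟨hb, hc⟩ i h1 h2
    split_ifs with him
    · exact hb i h1 him
    · exact hc i ⟨by omega, h2⟩
  · intro h
    exact ⟨fun i h1 h2 => by simpa [h2] using h i h1 (by omega),
      fun i hi => by simpa [show ¬i ≤ m by omega] using h i (by omega) hi.2⟩

theorem prod_failure_then_successes (p : ℝ) (m k : ℕ) :
    ∏ i ∈ Ioc m (m + k + 1), (if decide (i ≠ m + 1) = true then p else 1 - p)
      = (1 - p) * p ^ k := by
  have hsucc : ∀ i ∈ Ioc (m + 1) (m + k + 1),
      (if decide (i ≠ m + 1) = true then p else 1 - p) = p := fun i hi => by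
    simp [(mem_Ioc.1 hi).1.ne']
  rw [← Icc_add_one_left_eq_Ioc, ← Ioc_insert_left (by omega), prod_insert left_notMem_Ioc,
    prod_congr rfl hsucc, prod_const, Nat.card_Ioc, show m + k + 1 - (m + 1) = k by omega]
  simp

def IsBernoulliProcess (p : ℝ) (μ : Measure (ℕ → Bool)) : Prop :=
  ∀ (n : ℕ) (b : ℕ → Bool),
    μ (prefixCylinder n b) = ENNReal.ofReal (∏ i ∈ Icc 1 n, if b i = true then p else 1 - p)

section Bernoulli

variable {p : ℝ} {μ : Measure (ℕ → Bool)}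

theorem measure_prefixCylinder_inter_block (hp0 : 0 ≤ p) (hp1 : p ≤ 1)
    (hμ : IsBernoulliProcess p μ) {m n : ℕ} (hmn : m ≤ n) (b c : ℕ → Bool) :
    μ (prefixCylinder m b ∩ {ω | ∀ i ∈ Ioc m n, ω i = c i})
      = μ (prefixCylinder m b)
        * ENNReal.ofReal (∏ i ∈ Ioc m n, if c i = true then p else 1 - p) := by
  have hweight : ∀ b : Bool, 0 ≤ if b = true then p else 1 - p := fun b => by
    split_ifs <;> linarith
  have hIoc : ∀ n : ℕ, Icc 1 n = Ioc 0 n := Icc_add_one_left_eq_Ioc 0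
  rw [prefixCylinder_inter_block hmn, hμ, hμ,
    ← ENNReal.ofReal_mul (prod_nonneg fun i _ => hweight _), hIoc, hIoc,
    ← prod_Ioc_consecutive _ m.zero_le hmn]
  congr 2
  · exact prod_congr rfl fun i hi => by rw [if_pos (mem_Ioc.1 hi).2]
  · exact prod_congr rfl fun i hi => by rw [if_neg (mem_Ioc.1 hi).1.not_ge]

theorem measure_inter_block (hp0 : 0 ≤ p) (hp1 : p ≤ 1) (hμ : IsBernoulliProcess p μ)
    {A : Set (ℕ → Bool)} {m n : ℕ} (hA : DependsOn (· ∈ A) (Icc 1 m : Set ℕ))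
    (hmn : m ≤ n) (c : ℕ → Bool) :
    μ (A ∩ {ω | ∀ i ∈ Ioc m n, ω i = c i})
      = μ A * ENNReal.ofReal (∏ i ∈ Ioc m n, if c i = true then p else 1 - p) := by
  obtain ⟨S, hS, rfl⟩ := exists_eq_preimage_successes hA
  set w := ENNReal.ofReal (∏ i ∈ Ioc m n, if c i = true then p else 1 - p) with hw
  calc μ (successes m ⁻¹' S ∩ {ω | ∀ i ∈ Ioc m n, ω i = c i})
      _ = ∑ s ∈ S, μ (prefixCylinder m (fun i => decide (i ∈ s)) ∩ Set.univ) * w := by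
        simp_rw [measure_preimage_successes_inter μ hS (measurableSet_block m n c),
          measure_prefixCylinder_inter_block hp0 hp1 hμ hmn, ← hw, Set.inter_univ]
      _ = μ (successes m ⁻¹' S) * w := by
        rw [← sum_mul, ← measure_preimage_successes_inter μ hS .univ, Set.inter_univ]

end Bernoulli

theorem stmt13_general (p : ℝ) (hp0 : 0 < p) (hp1 : p < 1) (k : ℕ)
    (μ : Measure (ℕ → Bool))
    (hμ : ∀ (n : ℕ) (b : ℕ → Bool),
      μ {ω | ∀ i, 1 ≤ i → i ≤ n → ω i = b i}
        = ENNReal.ofReal (∏ i ∈ Finset.Icc 1 n, if b i = true then p else 1 - p)) :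
    ∀ x : ℕ, k + 2 ≤ x →
      (μ {ω | waitingTime k ω = x}).toReal
        = (1 - p) * p ^ k * (μ {ω | longestRun (x - k - 1) ω < k}).toReal := by
  intro x hx
  obtain ⟨m, rfl⟩ : ∃ m, x = m + k + 1 := ⟨x - k - 1, by omega⟩
  have hevent : {ω | waitingTime k ω = m + k + 1} = {ω | longestRun m ω < k}
      ∩ {ω | ∀ i ∈ Ioc m (m + k + 1), ω i = decide (i ≠ m + 1)} := by
    ext ω
    exact waitingTime_eq_iff
  have hdep : DependsOn (· ∈ {ω | longestRun m ω < k}) (Icc 1 m : Set ℕ) :=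
    fun ω ω' h => by simp only [Set.mem_ofPred_eq, longestRun_dependsOn m h]
  rw [show m + k + 1 - k - 1 = m by omega, hevent,
    measure_inter_block hp0.le hp1.le hμ hdep (by omega), prod_failure_then_successes,
    ENNReal.toReal_mul, ENNReal.toReal_ofReal (mul_nonneg (by linarith) (by positivity)),
    mul_comm]

theorem stmt13 (p : ℝ) (hp0 : 0 < p) (hp1 : p < 1) (k : ℕ) (hk : 1 ≤ k)
    (μ : Measure (ℕ → Bool)) [IsProbabilityMeasure μ]
    (hμ : ∀ (n : ℕ) (b : ℕ → Bool),
      μ {ω | ∀ i, 1 ≤ i → i ≤ n → ω i = b i}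
        = ENNReal.ofReal (∏ i ∈ Finset.Icc 1 n, if b i = true then p else 1 - p)) :
    ∀ x : ℕ, k + 2 ≤ x →
      (μ {ω | waitingTime k ω = x}).toReal
        = (1 - p) * p ^ k * (μ {ω | longestRun (x - k - 1) ω < k}).toReal :=
  stmt13_general p hp0 hp1 k μ hμ
end

section
/- Fix an integer k ≥ 1. For every integer r ≥ 0, the probability generating function of the Type I negative binomial waiting time T_{r,k} satisfies, in the ring of formal power series ℝ⟦X⟧, (1 − X + q·p^k·X^{k+1})^r · ∑_{n≥0} P(T_{r,k} = n)·X^n = p^{rk}·X^{rk}·(1 − p·X)^r. -/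
open MeasureTheory Finset PowerSeries ProbabilityTheory

/-!
Write `a n = P(V(k) = n)` and `c m` for the probability that no run of `k` successes occurs
among the first `m` trials. For `n ≥ 1`, `V(k) = n` means a run by time `n` but none by time
`n - 1`, so `∑ a n Xⁿ = 1 - (1 - X) ∑ c m Xᵐ`; and `V(k) = m + k + 1` means no run by time `m`,
then a failure and `k` successes, so by independence of disjoint blocks of trials
`∑ a n Xⁿ = pᵏ Xᵏ + q pᵏ X^{k+1} ∑ c m Xᵐ`. Eliminating `∑ c m Xᵐ` gives
`(1 - X + q pᵏ X^{k+1}) ∑ a n Xⁿ = pᵏ Xᵏ (1 - p X)`, which is the case `r = 1`; the general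
case follows because the generating series of a sum of independent variables is the product
of theirs. The coefficient `a 0 = P(no run ever)` vanishes since `c (j k) ≤ (1 - pᵏ)ʲ`.
-/

section BernoulliTrials

lemma DependsOn.preimage_image_domRestrict {ι : Type*} {α : ι → Type*} {A : Set (∀ i, α i)}
    {s : Set ι} (hA : DependsOn (· ∈ A) s) : s.domRestrict ⁻¹' (s.domRestrict '' A) = A := by
  refine Set.Subset.antisymm ?_ (Set.subset_preimage_image _ _)
  rintro ω ⟨ω', hω', hrestrict⟩
  exact (hA fun i hi => congrFun hrestrict ⟨i, hi⟩).mp hω'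

lemma measurableSet_of_dependsOn {ι β : Type*} [MeasurableSpace β] [Countable β]
    [MeasurableSingletonClass β] {s : Set ι} [Finite s] {A : Set (ι → β)}
    (hA : DependsOn (· ∈ A) s) : MeasurableSet A := by
  rw [← hA.preimage_image_domRestrict]
  exact Set.measurable_restrict s MeasurableSet.of_discrete

lemma measurableSet_setOf_forall_mem_eq (s : Finset ℕ) (d : ℕ → Bool) :
    MeasurableSet {ω : ℕ → Bool | ∀ i ∈ s, ω i = d i} :=
  measurableSet_of_dependsOn (s := (s : Set ℕ)) fun ω ω' h =>
    propext <| forall₂_congr fun i hi => by rw [h i hi]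

def IsBernoulliTrials (p : ℝ) (μ : Measure (ℕ → Bool)) : Prop :=
  ∀ (n : ℕ) (b : ℕ → Bool), μ {ω | ∀ i, 1 ≤ i → i ≤ n → ω i = b i}
    = ENNReal.ofReal (∏ i ∈ Finset.Icc 1 n, if b i = true then p else 1 - p)

variable {p : ℝ} {μ : Measure (ℕ → Bool)}

lemma measure_cylinder_inter_pattern_eq_mul (hp0 : 0 ≤ p) (hp1 : p ≤ 1)
    (hμ : IsBernoulliTrials p μ) {m n : ℕ} (hmn : m ≤ n) (ω₀ d : ℕ → Bool) :
    μ ({ω | ∀ i, 1 ≤ i → i ≤ m → ω i = ω₀ i} ∩ {ω | ∀ i ∈ Ioc m n, ω i = d i})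
      = μ {ω | ∀ i, 1 ≤ i → i ≤ m → ω i = ω₀ i}
        * ENNReal.ofReal (∏ i ∈ Ioc m n, if d i = true then p else 1 - p) := by
  let b : ℕ → Bool := fun i => if i ≤ m then ω₀ i else d i
  have hjoin : {ω : ℕ → Bool | ∀ i, 1 ≤ i → i ≤ m → ω i = ω₀ i} ∩ {ω | ∀ i ∈ Ioc m n, ω i = d i}
      = {ω | ∀ i, 1 ≤ i → i ≤ n → ω i = b i} := by
    ext ω
    simp only [b, Set.mem_inter_iff, Set.mem_ofPred_eq, Finset.mem_Ioc]
    constructor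
    · rintro ⟨hlow, hhigh⟩ i hi1 hin
      split_ifs with him
      exacts [hlow i hi1 him, hhigh i ⟨not_le.mp him, hin⟩]
    · intro h
      refine ⟨fun i hi1 him => ?_, fun i hi => ?_⟩
      · simpa [him] using h i hi1 (him.trans hmn)
      · simpa [not_le.mpr hi.1] using h i (by omega) hi.2
  have hsplit : (∏ i ∈ Icc 1 n, if b i = true then p else 1 - p)
      = (∏ i ∈ Icc 1 m, if ω₀ i = true then p else 1 - p)
        * ∏ i ∈ Ioc m n, if d i = true then p else 1 - p := by
    rw [← Nat.zero_add 1, Icc_add_one_left_eq_Ioc, Icc_add_one_left_eq_Ioc,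
      ← prod_Ioc_consecutive _ (Nat.zero_le m) hmn]
    congr 1 <;> refine prod_congr rfl fun i hi => ?_ <;> rw [Finset.mem_Ioc] at hi
    · simp [b, hi.2]
    · simp [b, not_le.mpr hi.1]
  rw [hjoin, hμ, hμ, hsplit, ENNReal.ofReal_mul]
  exact prod_nonneg fun i _ => by split_ifs <;> linarith

lemma measure_inter_pattern_eq_mul (hp0 : 0 ≤ p) (hp1 : p ≤ 1) (hμ : IsBernoulliTrials p μ)
    {A : Set (ℕ → Bool)} {m n : ℕ} (hA : DependsOn (· ∈ A) (Set.Icc 1 m)) (hmn : m ≤ n)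
    (d : ℕ → Bool) :
    μ (A ∩ {ω | ∀ i ∈ Ioc m n, ω i = d i})
      = μ A * ENNReal.ofReal (∏ i ∈ Ioc m n, if d i = true then p else 1 - p) := by
  set E := {ω : ℕ → Bool | ∀ i ∈ Ioc m n, ω i = d i}
  set w := ENNReal.ofReal (∏ i ∈ Ioc m n, if d i = true then p else 1 - p)
  let π := (Set.Icc 1 m).domRestrict (π := fun _ : ℕ => Bool)
  have hπ : Measurable π := Set.measurable_restrict _
  -- `A` is a union of fibres of `π`, i.e. of cylinders, so it suffices to compare the
  -- pushforwards along `π` on singletons.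
  have hfibres : (μ.restrict E).map π = w • μ.map π := by
    refine Measure.ext_of_singleton fun v => ?_
    let ω₀ : ℕ → Bool := fun i => if h : i ∈ Set.Icc 1 m then v ⟨i, h⟩ else false
    have hv : v = π ω₀ := funext fun i => by simp only [π, ω₀, Set.domRestrict_apply, dif_pos i.2]
    have hcyl : π ⁻¹' {v} = {ω | ∀ i, 1 ≤ i → i ≤ m → ω i = ω₀ i} := by
      ext ω
      simp [hv, π, funext_iff]
    rw [Measure.map_apply hπ (measurableSet_singleton _),
      Measure.restrict_apply' (measurableSet_setOf_forall_mem_eq _ d), Measure.smul_apply,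
      Measure.map_apply hπ (measurableSet_singleton _), hcyl,
      measure_cylinder_inter_pattern_eq_mul hp0 hp1 hμ hmn, smul_eq_mul, mul_comm]
  calc μ (A ∩ E) = (μ.restrict E).map π (π '' A) := by
        rw [Measure.map_apply hπ .of_discrete, hA.preimage_image_domRestrict,
          Measure.restrict_apply (measurableSet_of_dependsOn hA)]
    _ = μ A * w := by
        rw [hfibres, Measure.smul_apply, Measure.map_apply hπ .of_discrete,
          hA.preimage_image_domRestrict, smul_eq_mul, mul_comm]

end BernoulliTrials

section Runs

variable {k : ℕ} {ω ω' : ℕ → Bool}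

def RunEndsAt (k : ℕ) (ω : ℕ → Bool) (j : ℕ) : Prop :=
  k ≤ j ∧ ∀ i ∈ Icc (j - k + 1) j, ω i = true

def noRunUpTo (k m : ℕ) : Set (ℕ → Bool) :=
  {ω | ∀ j ≤ m, ¬ RunEndsAt k ω j}

lemma runEndsAt_congr {j : ℕ} (h : ∀ i ∈ Icc (j - k + 1) j, ω i = ω' i) :
    RunEndsAt k ω j ↔ RunEndsAt k ω' j :=
  and_congr_right fun _ => forall₂_congr fun i hi => by rw [h i hi]

lemma dependsOn_mem_noRunUpTo (k m : ℕ) : DependsOn (· ∈ noRunUpTo k m) (Set.Icc 1 m) :=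
  fun ω ω' h => propext <| forall₂_congr fun j hj => not_congr <| runEndsAt_congr
    fun i hi => h i (by simp only [Finset.mem_Icc] at hi; exact ⟨by omega, by omega⟩)

lemma noRunUpTo_antitone (k : ℕ) : Antitone (noRunUpTo k) :=
  fun _ _ hmm' _ hω j hj => hω j (hj.trans hmm')

lemma noRunUpTo_eq_univ {m : ℕ} (h : m < k) : noRunUpTo k m = Set.univ :=
  Set.eq_univ_of_forall fun _ j hj hrun => by have := hrun.1; omega

lemma waitingTime_eq_iff_s15 {n : ℕ} (hn : n ≠ 0) :
    waitingTime k ω = n ↔ RunEndsAt k ω n ∧ ω ∈ noRunUpTo k (n - 1) := by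
  change sInf {j | RunEndsAt k ω j} = n ↔ _
  constructor
  · rintro rfl
    have hne : {j | RunEndsAt k ω j}.Nonempty :=
      Set.nonempty_iff_ne_empty.mpr fun h => hn (by rw [h, Nat.sInf_empty])
    refine ⟨Nat.sInf_mem hne, fun j hj hrun => ?_⟩
    have := Nat.sInf_le (s := {j | RunEndsAt k ω j}) hrun
    omega
  · rintro ⟨hrun, hnorun⟩
    refine IsLeast.csInf_eq ⟨hrun, fun j hj => ?_⟩
    by_contra! hjn
    exact hnorun j (by omega) hj

lemma setOf_waitingTime_eq_zero_subset (hk : 1 ≤ k) (m : ℕ) :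
    {ω | waitingTime k ω = 0} ⊆ noRunUpTo k m := by
  intro ω hω j _ hrun
  rcases Nat.sInf_eq_zero.mp hω with h | h
  · exact absurd h.1 (by omega)
  · exact h.subset hrun

lemma setOf_waitingTime_eq_of_pos {n : ℕ} (hn : n ≠ 0) :
    {ω | waitingTime k ω = n} = noRunUpTo k (n - 1) \ noRunUpTo k n := by
  ext ω
  simp only [Set.mem_ofPred_eq, Set.mem_sdiff, waitingTime_eq_iff_s15 hn, noRunUpTo, not_forall,
    not_not]
  constructor
  · rintro ⟨hrun, hnorun⟩
    exact ⟨hnorun, n, le_rfl, hrun⟩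
  · rintro ⟨hnorun, j, hj, hrun⟩
    obtain rfl : j = n := by
      by_contra hjn
      exact hnorun j (by omega) hrun
    exact ⟨hrun, hnorun⟩

lemma setOf_waitingTime_eq_of_lt {n : ℕ} (hn : n ≠ 0) (hnk : n < k) :
    {ω | waitingTime k ω = n} = ∅ :=
  Set.eq_empty_of_forall_notMem fun _ hω => by
    have := ((waitingTime_eq_iff_s15 hn).mp hω).1.1
    omega

lemma setOf_waitingTime_eq_self (hk : 1 ≤ k) :
    {ω | waitingTime k ω = k} = {ω | ∀ i, 1 ≤ i → i ≤ k → ω i = true} := by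
  ext ω
  simp only [Set.mem_ofPred_eq, waitingTime_eq_iff_s15 (by omega : k ≠ 0), RunEndsAt,
    noRunUpTo_eq_univ (by omega : k - 1 < k), Set.mem_univ, and_true, le_rfl, true_and,
    Nat.sub_self, Finset.mem_Icc]
  exact ⟨fun h i hi1 hik => h i ⟨hi1, hik⟩, fun h i hi => h i hi.1 hi.2⟩

lemma setOf_waitingTime_eq_add (m : ℕ) :
    {ω | waitingTime k ω = m + k + 1}
      = noRunUpTo k m ∩ {ω | ∀ i ∈ Ioc m (m + k + 1), ω i = decide (i ≠ m + 1)} := by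
  ext ω
  simp only [Set.mem_ofPred_eq, Set.mem_inter_iff, waitingTime_eq_iff_s15 (Nat.succ_ne_zero _),
    Finset.mem_Ioc]
  constructor
  · rintro ⟨hrun, hnorun⟩
    have hfail : ω (m + 1) = false := by
      by_contra! htrue
      refine hnorun (m + k) (by omega) ⟨by omega, fun i hi => ?_⟩
      simp only [Finset.mem_Icc] at hi
      rcases (show i = m + 1 ∨ m + 2 ≤ i by omega) with rfl | hi'
      · simpa using htrue
      · exact hrun.2 i (Finset.mem_Icc.mpr ⟨by omega, by omega⟩)
    refine ⟨noRunUpTo_antitone k (by omega) hnorun, fun i hi => ?_⟩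
    rcases (show i = m + 1 ∨ m + 2 ≤ i by omega) with rfl | hi'
    · simpa using hfail
    · simpa [show i ≠ m + 1 by omega] using hrun.2 i (Finset.mem_Icc.mpr ⟨by omega, hi.2⟩)
  · rintro ⟨hnorun, hpat⟩
    refine ⟨⟨by omega, fun i hi => ?_⟩, fun j hj hrun => ?_⟩
    · simp only [Finset.mem_Icc] at hi
      simpa [show i ≠ m + 1 by omega] using hpat i ⟨by omega, hi.2⟩
    · by_cases hjm : j ≤ m
      · exact hnorun j hjm hrun
      · have := hrun.2 (m + 1) (Finset.mem_Icc.mpr ⟨by omega, by omega⟩)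
        simp [hpat (m + 1) ⟨by omega, by omega⟩] at this

lemma noRunUpTo_add_subset (m : ℕ) :
    noRunUpTo k (m + k)
      ⊆ noRunUpTo k m \ (noRunUpTo k m ∩ {ω | ∀ i ∈ Ioc m (m + k), ω i = true}) := by
  rintro ω hω
  refine ⟨noRunUpTo_antitone k (by omega) hω, fun ⟨_, hones⟩ => hω (m + k) le_rfl ⟨by omega, ?_⟩⟩
  intro i hi
  simp only [Finset.mem_Icc] at hi
  exact hones i (Finset.mem_Ioc.mpr ⟨by omega, hi.2⟩)

end Runs

section WaitingTimeDistribution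

variable {p : ℝ} {μ : Measure (ℕ → Bool)} {k : ℕ}

lemma measure_waitingTime_eq_self (hμ : IsBernoulliTrials p μ) (hk : 1 ≤ k) :
    μ {ω | waitingTime k ω = k} = ENNReal.ofReal (p ^ k) := by
  rw [setOf_waitingTime_eq_self hk, hμ k fun _ => true]
  simp

lemma measure_waitingTime_eq_add (hp0 : 0 ≤ p) (hp1 : p ≤ 1) (hμ : IsBernoulliTrials p μ)
    (m : ℕ) :
    μ {ω | waitingTime k ω = m + k + 1}
      = μ (noRunUpTo k m) * ENNReal.ofReal ((1 - p) * p ^ k) := by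
  rw [setOf_waitingTime_eq_add, measure_inter_pattern_eq_mul hp0 hp1 hμ
    (dependsOn_mem_noRunUpTo k m) (by omega), ← prod_Ioc_consecutive _ (Nat.le_succ m)
    (by omega : m + 1 ≤ m + k + 1), Nat.Ioc_succ_singleton, prod_singleton,
    prod_congr rfl fun i hi => by rw [if_pos (by simp at hi ⊢; omega)]]
  simp [add_right_comm m k 1]

lemma measure_noRunUpTo_add_le [IsFiniteMeasure μ] (hp0 : 0 ≤ p) (hp1 : p ≤ 1)
    (hμ : IsBernoulliTrials p μ) (m : ℕ) :
    μ (noRunUpTo k (m + k)) ≤ μ (noRunUpTo k m) * ENNReal.ofReal (1 - p ^ k) := by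
  have hones := measure_inter_pattern_eq_mul hp0 hp1 hμ (dependsOn_mem_noRunUpTo k m)
    (Nat.le_add_right m k) fun _ => true
  simp only [if_true, prod_const, Nat.card_Ioc, Nat.add_sub_cancel_left] at hones
  calc μ (noRunUpTo k (m + k))
      ≤ μ (noRunUpTo k m \ (noRunUpTo k m ∩ {ω | ∀ i ∈ Ioc m (m + k), ω i = true})) :=
        measure_mono (noRunUpTo_add_subset m)
    _ = μ (noRunUpTo k m) - μ (noRunUpTo k m) * ENNReal.ofReal (p ^ k) := by
        rw [measure_sdiff Set.inter_subset_left
          ((measurableSet_of_dependsOn (dependsOn_mem_noRunUpTo k m)).inter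
            (measurableSet_setOf_forall_mem_eq _ _)).nullMeasurableSet (measure_ne_top _ _),
          hones]
    _ = μ (noRunUpTo k m) * ENNReal.ofReal (1 - p ^ k) := by
        rw [ENNReal.ofReal_sub _ (by positivity), ENNReal.ofReal_one,
          ENNReal.mul_sub fun _ _ => measure_ne_top _ _, mul_one]

lemma measure_noRunUpTo_mul_le [IsProbabilityMeasure μ] (hp0 : 0 ≤ p) (hp1 : p ≤ 1)
    (hμ : IsBernoulliTrials p μ) (j : ℕ) :
    μ (noRunUpTo k (j * k)) ≤ ENNReal.ofReal (1 - p ^ k) ^ j := by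
  induction j with
  | zero => simpa using prob_le_one
  | succ j ih =>
    rw [Nat.succ_mul, pow_succ]
    exact (measure_noRunUpTo_add_le hp0 hp1 hμ _).trans (mul_le_mul_left ih _)

lemma measure_waitingTime_eq_zero [IsProbabilityMeasure μ] (hp0 : 0 < p) (hp1 : p ≤ 1)
    (hμ : IsBernoulliTrials p μ) (hk : 1 ≤ k) :
    μ {ω | waitingTime k ω = 0} = 0 := by
  have hlt : ENNReal.ofReal (1 - p ^ k) < 1 :=
    ENNReal.ofReal_lt_one.mpr (by linarith [pow_pos hp0 k])
  refine le_antisymm (ge_of_tendsto' (ENNReal.tendsto_pow_atTop_nhds_zero_of_lt_one hlt)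
    fun j => ?_) zero_le
  exact (measure_mono (setOf_waitingTime_eq_zero_subset hk (j * k))).trans
    (measure_noRunUpTo_mul_le hp0.le hp1 hμ j)

end WaitingTimeDistribution

noncomputable def pgf {Ω : Type*} [MeasurableSpace Ω] (P : Measure Ω) (T : Ω → ℕ) : ℝ⟦X⟧ :=
  mk fun n => (P {ω | T ω = n}).toReal

section WaitingTimeSeries

variable {p : ℝ} {μ : Measure (ℕ → Bool)} [IsProbabilityMeasure μ] {k : ℕ}

lemma pgf_waitingTime_eq_one_sub (hp0 : 0 < p) (hp1 : p ≤ 1) (hμ : IsBernoulliTrials p μ)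
    (hk : 1 ≤ k) :
    pgf μ (waitingTime k) = 1 - (1 - X) * PowerSeries.mk fun m => (μ (noRunUpTo k m)).toReal := by
  ext (_ | n)
  · simp [pgf, measure_waitingTime_eq_zero hp0 hp1 hμ hk, noRunUpTo_eq_univ hk]
  · rw [pgf, coeff_mk, setOf_waitingTime_eq_of_pos (n := n + 1) (by omega), Nat.add_sub_cancel,
      measure_sdiff (noRunUpTo_antitone k n.le_succ)
        (measurableSet_of_dependsOn (dependsOn_mem_noRunUpTo k _)).nullMeasurableSet
        (measure_ne_top _ _),
      ENNReal.toReal_sub_of_le (measure_mono (noRunUpTo_antitone k n.le_succ))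
        (measure_ne_top _ _)]
    simp [sub_mul, coeff_succ_X_mul]

lemma pgf_waitingTime_eq_add (hp0 : 0 < p) (hp1 : p ≤ 1) (hμ : IsBernoulliTrials p μ)
    (hk : 1 ≤ k) :
    pgf μ (waitingTime k) = C (p ^ k) * X ^ k
      + C ((1 - p) * p ^ k) * X ^ (k + 1) * PowerSeries.mk fun m => (μ (noRunUpTo k m)).toReal := by
  ext n
  rw [pgf, coeff_mk, map_add, coeff_C_mul_X_pow, mul_assoc, coeff_C_mul, coeff_X_pow_mul']
  rcases lt_trichotomy n k with hnk | rfl | hnk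
  · rw [if_neg hnk.ne, if_neg (by omega)]
    rcases Nat.eq_zero_or_pos n with rfl | hn
    · simp [measure_waitingTime_eq_zero hp0 hp1 hμ hk]
    · simp [setOf_waitingTime_eq_of_lt hn.ne' hnk]
  · simp [measure_waitingTime_eq_self hμ hk, hp0.le]
  · obtain ⟨m, rfl⟩ : ∃ m, n = m + k + 1 := ⟨n - k - 1, by omega⟩
    rw [measure_waitingTime_eq_add hp0.le hp1 hμ, if_neg (by omega), if_pos (by omega),
      ENNReal.toReal_mul, ENNReal.toReal_ofReal (by nlinarith [pow_pos hp0 k]), coeff_mk]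
    simp [mul_comm]

lemma pgf_waitingTime (hp0 : 0 < p) (hp1 : p ≤ 1) (hμ : IsBernoulliTrials p μ) (hk : 1 ≤ k) :
    (1 - X + C ((1 - p) * p ^ k) * X ^ (k + 1)) * pgf μ (waitingTime k)
      = C (p ^ k) * X ^ k * (1 - C p * X) := by
  have hI := pgf_waitingTime_eq_one_sub hp0 hp1 hμ hk
  have hII := pgf_waitingTime_eq_add hp0 hp1 hμ hk
  have hC : (C ((1 - p) * p ^ k) : ℝ⟦X⟧) = (1 - C p) * C (p ^ k) := by simp
  rw [hC] at hII ⊢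
  linear_combination (1 - X) * hII + (1 - C p) * C (p ^ k) * X ^ (k + 1) * hI

end WaitingTimeSeries

lemma pgf_add_of_indepFun {Ω : Type*} [MeasurableSpace Ω] {P : Measure Ω} [IsFiniteMeasure P]
    {T₁ T₂ : Ω → ℕ} (h₁ : Measurable T₁) (h₂ : Measurable T₂) (h : IndepFun T₁ T₂ P) :
    pgf P (T₁ + T₂) = pgf P T₁ * pgf P T₂ := by
  ext n
  have hpair : Measurable fun ω => (T₁ ω, T₂ ω) := h₁.prodMk h₂
  have hsum : P {ω | (T₁ + T₂) ω = n}
      = ∑ ij ∈ antidiagonal n, P {ω | T₁ ω = ij.1} * P {ω | T₂ ω = ij.2} := by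
    calc P {ω | (T₁ + T₂) ω = n}
        = P ((fun ω => (T₁ ω, T₂ ω)) ⁻¹' ↑(antidiagonal n)) := by congr; ext; simp
      _ = ∑ ij ∈ antidiagonal n, P ((fun ω => (T₁ ω, T₂ ω)) ⁻¹' {ij}) :=
        (sum_measure_preimage_singleton _ fun ij _ => hpair (measurableSet_singleton ij)).symm
      _ = _ := sum_congr rfl fun ij _ => by
        simpa [Set.preimage, Prod.ext_iff, Set.ofPred_and] using
          h.measure_inter_preimage_eq_mul {ij.1} {ij.2} (measurableSet_singleton _)
            (measurableSet_singleton _)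
  rw [pgf, coeff_mk, hsum, ENNReal.toReal_sum fun _ _ =>
    ENNReal.mul_ne_top (measure_ne_top _ _) (measure_ne_top _ _), coeff_mul]
  simp [pgf, ENNReal.toReal_mul]

lemma pgf_const_zero {Ω : Type*} [MeasurableSpace Ω] (P : Measure Ω) [IsProbabilityMeasure P] :
    pgf P (fun _ => 0) = 1 := by
  ext n
  rcases eq_or_ne n 0 with rfl | hn
  · simp [pgf]
  · simp [pgf, hn, hn.symm]

lemma pgf_sum_range_succ {Ω : Type*} [MeasurableSpace Ω] {P : Measure Ω} [IsFiniteMeasure P]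
    {Y : ℕ → Ω → ℕ} (hY : ∀ i, Measurable (Y i)) (hindep : iIndepFun Y P) (r : ℕ) :
    pgf P (fun ω => ∑ i ∈ range (r + 1), Y i ω)
      = pgf P (fun ω => ∑ i ∈ range r, Y i ω) * pgf P (Y r) := by
  have hsum : (fun ω => ∑ i ∈ range (r + 1), Y i ω) = (fun ω => ∑ i ∈ range r, Y i ω) + Y r := by
    ext ω
    simp [sum_range_succ]
  have hindep_last : IndepFun (fun ω => ∑ i ∈ range r, Y i ω) (Y r) P := by
    simpa only [Finset.sum_fn] using hindep.indepFun_finsetSum_of_notMem hY notMem_range_self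
  rw [hsum, pgf_add_of_indepFun (Finset.measurable_sum _ fun i _ => hY i) (hY r) hindep_last]

theorem stmt15 (p : ℝ) (hp0 : 0 < p) (hp1 : p < 1) (k : ℕ) (hk : 1 ≤ k)
    (μ : Measure (ℕ → Bool)) [IsProbabilityMeasure μ]
    (hμ : ∀ (n : ℕ) (b : ℕ → Bool),
      μ {ω | ∀ i, 1 ≤ i → i ≤ n → ω i = b i}
        = ENNReal.ofReal (∏ i ∈ Finset.Icc 1 n, if b i = true then p else 1 - p))
    -- `Y 0, Y 1, …` are independent random variables, each distributed as `V(k)`;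
    -- `T r = Y 0 + ⋯ + Y (r-1)` is the Type I negative binomial waiting time, `T 0 = 0`.
    {Ω : Type*} [MeasurableSpace Ω] (P : Measure Ω) [IsProbabilityMeasure P]
    (Y : ℕ → Ω → ℕ) (hYmeas : ∀ i, Measurable (Y i))
    (hYindep : iIndepFun Y P)
    (hYdist : ∀ (i n : ℕ), P {ω | Y i ω = n} = μ {ω | waitingTime k ω = n}) :
    ∀ r : ℕ,
      (1 - PowerSeries.X
          + PowerSeries.C (R := ℝ) ((1 - p) * p ^ k) * PowerSeries.X ^ (k + 1)) ^ r *
        PowerSeries.mk (fun n => (P {ω | ∑ i ∈ Finset.range r, Y i ω = n}).toReal)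
      = PowerSeries.C (R := ℝ) (p ^ (r * k)) * PowerSeries.X ^ (r * k)
          * (1 - PowerSeries.C (R := ℝ) p * PowerSeries.X) ^ r := by
  intro r
  change _ * pgf P (fun ω => ∑ i ∈ range r, Y i ω) = _
  have hdist : ∀ i, pgf P (Y i) = pgf μ (waitingTime k) := fun i => by simp only [pgf, hYdist]
  induction r with
  | zero => simp [pgf_const_zero]
  | succ r ih =>
    set D : ℝ⟦X⟧ := 1 - X + C ((1 - p) * p ^ k) * X ^ (k + 1)
    set F := pgf P fun ω => ∑ i ∈ range r, Y i ω
    rw [pgf_sum_range_succ hYmeas hYindep, hdist]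
    calc D ^ (r + 1) * (F * pgf μ (waitingTime k))
        = (D ^ r * F) * (D * pgf μ (waitingTime k)) := by ring
      _ = C (p ^ (r * k)) * X ^ (r * k) * (1 - C p * X) ^ r
            * (C (p ^ k) * X ^ k * (1 - C p * X)) := by
        rw [ih, pgf_waitingTime hp0 hp1.le hμ hk]
      _ = C (p ^ ((r + 1) * k)) * X ^ ((r + 1) * k) * (1 - C p * X) ^ (r + 1) := by
        rw [add_mul, one_mul, pow_add p, map_mul, pow_add X]
        ring
end
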